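/- arXiv:1712.03258 — 6 statements merged into one kernel-verified Lean document; each statement's English description precedes it below -/
import Mathlib

section
/- For γ_1, γ_2 ∈ SL(n+1,ℤ), if there exist δ ∈ Δ (a subgroup of SL(n+1,ℤ)), h_1, h_2 ∈ H, and y > 0 with δγ_1h_1 = γ_2h_2a(y), then y = 1 and γ_2^{-1}δγ_1 ∈ Γ_H. Consequently the sets Δγ_1 H_a and Δγ_2 H_a in SL(n+1,ℝ) are either equal or disjoint, and they coincide exactly when Δγ_1 = Δγ_2γ̃ for some γ̃ ∈ Γ_H. -/
open Matrix

noncomputable section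

abbrev SL (m : ℕ) (R : Type) [CommRing R] := Matrix.SpecialLinearGroup (Fin m) R

def lastVec (n : ℕ) (R : Type) [CommRing R] : Fin (n+1) → R := Pi.single (Fin.last n) 1

def Primitive {n : ℕ} (a : Fin (n+1) → ℤ) : Prop := Finset.univ.gcd a = 1

/-- The stabilizer of the row vector (0,...,0,1) under right multiplication. -/
def stab (n : ℕ) (R : Type) [CommRing R] : Subgroup (SL (n+1) R) where
  carrier := {γ | Matrix.vecMul (lastVec n R) (γ : Matrix (Fin (n+1)) (Fin (n+1)) R) = lastVec n R}
  one_mem' := by simp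
  mul_mem' := by
    intro a b ha hb
    simp only [Set.mem_setOf_eq] at *
    rw [Matrix.SpecialLinearGroup.coe_mul, ← Matrix.vecMul_vecMul, ha, hb]
  inv_mem' := by
    intro a ha
    simp only [Set.mem_setOf_eq] at *
    conv_lhs => rw [← ha]
    rw [Matrix.vecMul_vecMul, ← Matrix.SpecialLinearGroup.coe_mul, mul_inv_cancel,
      Matrix.SpecialLinearGroup.coe_one, Matrix.vecMul_one]

/-- The diagonal matrix a(y) = diag(y^{1/n} I_n, y⁻¹). -/
def aMat (n : ℕ) (y : ℝ) : Matrix (Fin (n+1)) (Fin (n+1)) ℝ :=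
  Matrix.diagonal (fun i => if i = Fin.last n then y⁻¹ else y ^ ((n : ℝ)⁻¹))

/-- The unipotent matrix h(x), with bottom-left row −x. -/
def hMat {n : ℕ} (x : Fin n → ℝ) : Matrix (Fin (n+1)) (Fin (n+1)) ℝ :=
  fun i j => if i = j then 1 else
    if i = Fin.last n then (if hj : j = Fin.last n then 0 else -x (j.castPred hj)) else 0

/-- The unipotent integer matrix u(x). -/
def uMat {n : ℕ} (x : Fin n → ℤ) : Matrix (Fin (n+1)) (Fin (n+1)) ℤ :=
  fun i j => if i = j then 1 else
    if i = Fin.last n then (if hj : j = Fin.last n then 0 else x (j.castPred hj)) else 0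

/-- The Euclidean norm on ℝ^n. -/
def enorm {n : ℕ} (v : Fin n → ℝ) : ℝ := Real.sqrt (∑ i, (v i)^2)

abbrev mapSL (n : ℕ) : SL (n+1) ℤ →* SL (n+1) ℝ :=
  Matrix.SpecialLinearGroup.map (Int.castRingHom ℝ)

instance (m : ℕ) : TopologicalSpace (SL m ℝ) :=
  TopologicalSpace.induced (fun A => (A : Matrix (Fin m) (Fin m) ℝ)) inferInstance

/-!
Put `B = γ₂⁻¹δγ₁`, so that `B h₁ = h₂ a(y)`. Since `H` fixes the row vector `e = (0,…,0,1)`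
and `e a(y) = y⁻¹ e`, taking last rows gives `e B = y⁻¹ e`. An integral matrix of determinant
one whose last row is `k e` has `k ∣ 1` (expand `e = e B adj(B)`), so the positive integer
`y⁻¹` equals `1`, and then `B ∈ Γ_H`. If two sets `Δγ₁H_a`, `Δγ₂H_a` meet, absorbing one
factor `a(y)` into the other produces exactly such an equation.
-/

section RowComputations

variable {n : ℕ}

lemma vecMul_lastVec {R : Type} [CommRing R] (M : Matrix (Fin (n+1)) (Fin (n+1)) R) :
    lastVec n R ᵥ* M = M (Fin.last n) := by
  ext j
  simp [lastVec, vecMul, dotProduct, Pi.single_apply]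

lemma mem_stab_iff {R : Type} [CommRing R] {γ : SL (n+1) R} :
    γ ∈ stab n R ↔ (γ : Matrix (Fin (n+1)) (Fin (n+1)) R) (Fin.last n) = lastVec n R := by
  change _ ᵥ* _ = _ ↔ _
  rw [vecMul_lastVec]

lemma isUnit_of_row_last_eq_smul {R : Type} [CommRing R] (B : SL (n+1) R) {k : R}
    (hB : (B : Matrix (Fin (n+1)) (Fin (n+1)) R) (Fin.last n) = k • lastVec n R) : IsUnit k := by
  have hrow : lastVec n R = k • adjugate (B : Matrix (Fin (n+1)) (Fin (n+1)) R) (Fin.last n) :=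
    calc lastVec n R
        = lastVec n R ᵥ* ((B : Matrix (Fin (n+1)) (Fin (n+1)) R) * adjugate B) := by
          rw [mul_adjugate, B.prop, one_smul, vecMul_one]
      _ = _ := by rw [← vecMul_vecMul, vecMul_lastVec, hB, smul_vecMul, vecMul_lastVec]
  refine IsUnit.of_mul_eq_one (adjugate (B : Matrix _ _ R) (Fin.last n) (Fin.last n)) ?_
  simpa [lastVec] using (congrFun hrow (Fin.last n)).symm

lemma mapSL_apply (γ : SL (n+1) ℤ) (i j : Fin (n+1)) :
    (mapSL n γ : Matrix (Fin (n+1)) (Fin (n+1)) ℝ) i j = (γ i j : ℝ) := by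
  simp [Matrix.SpecialLinearGroup.map_apply_coe]

lemma mapSL_mem_stab {γ : SL (n+1) ℤ} (hγ : γ ∈ stab n ℤ) : mapSL n γ ∈ stab n ℝ := by
  rw [mem_stab_iff] at hγ ⊢
  ext j
  rw [mapSL_apply, hγ]
  simp [lastVec, Pi.single_apply]

end RowComputations

section Diagonal

variable {n : ℕ}

lemma aMat_one : aMat n 1 = 1 := by
  simp [aMat, diagonal_one]

lemma aMat_mul_aMat {y z : ℝ} (hy : 0 ≤ y) (hz : 0 ≤ z) :
    aMat n y * aMat n z = aMat n (y * z) := by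
  rw [aMat, aMat, aMat, diagonal_mul_diagonal]
  congr 1
  ext i
  split_ifs <;> simp [Real.mul_rpow hy hz, mul_comm]

lemma lastVec_vecMul_aMat (y : ℝ) : lastVec n ℝ ᵥ* aMat n y = y⁻¹ • lastVec n ℝ := by
  ext j
  simp only [aMat, vecMul_diagonal, lastVec, Pi.smul_apply, smul_eq_mul, Pi.single_apply]
  split_ifs <;> ring

lemma eq_mul_aMat_of_mul_aMat_eq {X Y : Matrix (Fin (n+1)) (Fin (n+1)) ℝ} {y z : ℝ}
    (hy : 0 < y) (hz : 0 ≤ z) (E : X * aMat n y = Y * aMat n z) : X = Y * aMat n (z * y⁻¹) := by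
  have hinv := aMat_mul_aMat (n := n) hy.le (inv_nonneg.2 hy.le)
  rw [mul_inv_cancel₀ hy.ne', aMat_one] at hinv
  rw [← aMat_mul_aMat hz (inv_nonneg.2 hy.le), ← mul_assoc, ← E, mul_assoc, hinv, mul_one]

end Diagonal

section LastRow

variable {n : ℕ}

lemma mapSL_inv_mul_cancel_left (γ : SL (n+1) ℤ) (X : Matrix (Fin (n+1)) (Fin (n+1)) ℝ) :
    (mapSL n γ⁻¹ : Matrix (Fin (n+1)) (Fin (n+1)) ℝ) * ((mapSL n γ : Matrix _ _ ℝ) * X) = X := by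
  rw [← mul_assoc, ← Matrix.SpecialLinearGroup.coe_mul, ← map_mul, inv_mul_cancel, map_one,
    Matrix.SpecialLinearGroup.coe_one, one_mul]

lemma mapSL_inv_mul_eq_of_mul_eq {γ γ' : SL (n+1) ℤ} {X Y : Matrix (Fin (n+1)) (Fin (n+1)) ℝ}
    (E : (mapSL n γ : Matrix (Fin (n+1)) (Fin (n+1)) ℝ) * X = (mapSL n γ' : Matrix _ _ ℝ) * Y) :
    (mapSL n (γ'⁻¹ * γ) : Matrix (Fin (n+1)) (Fin (n+1)) ℝ) * X = Y := by
  rw [map_mul, Matrix.SpecialLinearGroup.coe_mul, mul_assoc, E, mapSL_inv_mul_cancel_left]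

lemma row_last_eq_of_mul_eq_mul_aMat {M : Matrix (Fin (n+1)) (Fin (n+1)) ℝ} {h₁ h₂ : SL (n+1) ℝ}
    (hh₁ : h₁ ∈ stab n ℝ) (hh₂ : h₂ ∈ stab n ℝ) {y : ℝ}
    (E : M * (h₁ : Matrix (Fin (n+1)) (Fin (n+1)) ℝ)
      = (h₂ : Matrix (Fin (n+1)) (Fin (n+1)) ℝ) * aMat n y) :
    M (Fin.last n) = y⁻¹ • lastVec n ℝ := by
  have hM : M = (h₂ : Matrix (Fin (n+1)) (Fin (n+1)) ℝ) * aMat n y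
      * (↑h₁⁻¹ : Matrix (Fin (n+1)) (Fin (n+1)) ℝ) := by
    rw [← E, mul_assoc, ← Matrix.SpecialLinearGroup.coe_mul, mul_inv_cancel,
      Matrix.SpecialLinearGroup.coe_one, mul_one]
  rw [← vecMul_lastVec M, hM, ← vecMul_vecMul, ← vecMul_vecMul, hh₂, lastVec_vecMul_aMat,
    smul_vecMul, (stab n ℝ).inv_mem hh₁]

theorem eq_one_and_mem_stab_of_mul_eq_mul_aMat {B : SL (n+1) ℤ} {h₁ h₂ : SL (n+1) ℝ}
    (hh₁ : h₁ ∈ stab n ℝ) (hh₂ : h₂ ∈ stab n ℝ) {y : ℝ} (hy : 0 < y)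
    (E : (mapSL n B : Matrix (Fin (n+1)) (Fin (n+1)) ℝ) * (h₁ : Matrix (Fin (n+1)) (Fin (n+1)) ℝ)
      = (h₂ : Matrix (Fin (n+1)) (Fin (n+1)) ℝ) * aMat n y) :
    y = 1 ∧ B ∈ stab n ℤ := by
  have hrow := row_last_eq_of_mul_eq_mul_aMat hh₁ hh₂ E
  set k := (B : Matrix (Fin (n+1)) (Fin (n+1)) ℤ) (Fin.last n) (Fin.last n)
  have hk : (k : ℝ) = y⁻¹ := by
    simpa [mapSL_apply, lastVec] using congrFun hrow (Fin.last n)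
  have hBrow : (B : Matrix (Fin (n+1)) (Fin (n+1)) ℤ) (Fin.last n) = k • lastVec n ℤ := by
    ext j
    have hj := congrFun hrow j
    rw [mapSL_apply] at hj
    by_cases hjl : j = Fin.last n
    · subst hjl
      simp [k, lastVec]
    · simp only [lastVec, Pi.smul_apply, Pi.single_eq_of_ne hjl, smul_zero] at hj ⊢
      exact_mod_cast hj
  have hk1 : k = 1 := by
    have hkpos : 0 < k := by exact_mod_cast hk ▸ inv_pos.2 hy
    rcases Int.isUnit_iff.1 (isUnit_of_row_last_eq_smul B hBrow) with h | h <;> omega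
  refine ⟨?_, mem_stab_iff.2 (by rw [hBrow, hk1, one_smul])⟩
  rwa [hk1, Int.cast_one, eq_comm, inv_eq_one] at hk

end LastRow

section CosetsOfHa

variable {n : ℕ} (Δ : Subgroup (SL (n+1) ℤ))

/-- The set `Δ γ H_a` of the paper. -/
def cosetHa (γ : SL (n+1) ℤ) : Set (Matrix (Fin (n+1)) (Fin (n+1)) ℝ) :=
  {A | ∃ δ ∈ Δ, ∃ h ∈ stab n ℝ, ∃ y : ℝ, 1 ≤ y ∧
    A = ((mapSL n (δ * γ) : SL (n+1) ℝ) : Matrix (Fin (n+1)) (Fin (n+1)) ℝ)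
      * ((h : SL (n+1) ℝ) : Matrix (Fin (n+1)) (Fin (n+1)) ℝ) * aMat n y}

lemma cosetHa_nonempty (γ : SL (n+1) ℤ) : (cosetHa Δ γ).Nonempty :=
  ⟨_, 1, Δ.one_mem, 1, (stab n ℝ).one_mem, 1, le_rfl, rfl⟩

lemma cosetHa_mul_subset {δ₀ γ γt : SL (n+1) ℤ} (hδ₀ : δ₀ ∈ Δ) (hγt : γt ∈ stab n ℤ) :
    cosetHa Δ (δ₀ * γ * γt) ⊆ cosetHa Δ γ := by
  rintro A ⟨δ, hδ, h, hh, y, hy, rfl⟩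
  refine ⟨δ * δ₀, Δ.mul_mem hδ hδ₀, mapSL n γt * h,
    (stab n ℝ).mul_mem (mapSL_mem_stab hγt) hh, y, hy, ?_⟩
  simp only [← mul_assoc, map_mul, Matrix.SpecialLinearGroup.coe_mul]

lemma cosetHa_mul_eq {δ₀ γ γt : SL (n+1) ℤ} (hδ₀ : δ₀ ∈ Δ) (hγt : γt ∈ stab n ℤ) :
    cosetHa Δ (δ₀ * γ * γt) = cosetHa Δ γ := by
  refine (cosetHa_mul_subset Δ hδ₀ hγt).antisymm ?_
  have hγ : γ = δ₀⁻¹ * (δ₀ * γ * γt) * γt⁻¹ := by group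
  conv_lhs => rw [hγ]
  exact cosetHa_mul_subset Δ (Δ.inv_mem hδ₀) ((stab n ℤ).inv_mem hγt)

lemma exists_eq_mul_of_not_disjoint_cosetHa {γ₁ γ₂ : SL (n+1) ℤ}
    (hd : ¬Disjoint (cosetHa Δ γ₁) (cosetHa Δ γ₂)) :
    ∃ γt ∈ stab n ℤ, ∃ δ ∈ Δ, γ₁ = δ * γ₂ * γt := by
  obtain ⟨A, ⟨δ₁, hδ₁, h₁, hh₁, y₁, hy₁, rfl⟩, ⟨δ₂, hδ₂, h₂, hh₂, y₂, hy₂, E⟩⟩ :=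
    Set.not_disjoint_iff.1 hd
  have hy₁0 : 0 < y₁ := one_pos.trans_le hy₁
  replace E := eq_mul_aMat_of_mul_aMat_eq hy₁0 (zero_le_one.trans hy₂) E
  rw [mul_assoc _ _ (aMat n _)] at E
  obtain ⟨-, hmem⟩ := eq_one_and_mem_stab_of_mul_eq_mul_aMat hh₁ hh₂
    (mul_pos (one_pos.trans_le hy₂) (inv_pos.2 hy₁0)) (mapSL_inv_mul_eq_of_mul_eq E)
  exact ⟨_, hmem, δ₁⁻¹ * δ₂, Δ.mul_mem (Δ.inv_mem hδ₁) hδ₂, by group⟩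

lemma cosetHa_eq_iff {γ₁ γ₂ : SL (n+1) ℤ} :
    cosetHa Δ γ₁ = cosetHa Δ γ₂ ↔ ∃ γt ∈ stab n ℤ, ∃ δ ∈ Δ, γ₁ = δ * γ₂ * γt := by
  refine ⟨fun hEq => exists_eq_mul_of_not_disjoint_cosetHa Δ ?_, ?_⟩
  · rw [hEq, disjoint_self]
    exact (cosetHa_nonempty Δ γ₂).ne_empty
  · rintro ⟨γt, hγt, δ, hδ, rfl⟩
    exact cosetHa_mul_eq Δ hδ hγt

lemma cosetHa_eq_or_disjoint (γ₁ γ₂ : SL (n+1) ℤ) :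
    cosetHa Δ γ₁ = cosetHa Δ γ₂ ∨ Disjoint (cosetHa Δ γ₁) (cosetHa Δ γ₂) :=
  or_iff_not_imp_right.2 fun hd =>
    (cosetHa_eq_iff Δ).2 (exists_eq_mul_of_not_disjoint_cosetHa Δ hd)

end CosetsOfHa

theorem stmt8_general (n : ℕ) (Δ : Subgroup (SL (n+1) ℤ)) :
    let S : SL (n+1) ℤ → Set (Matrix (Fin (n+1)) (Fin (n+1)) ℝ) := fun γ =>
      {A | ∃ δ ∈ Δ, ∃ h ∈ stab n ℝ, ∃ y : ℝ, 1 ≤ y ∧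
        A = ((mapSL n (δ * γ) : SL (n+1) ℝ) : Matrix (Fin (n+1)) (Fin (n+1)) ℝ)
              * ((h : SL (n+1) ℝ) : Matrix (Fin (n+1)) (Fin (n+1)) ℝ) * aMat n y}
    (∀ (γ₁ γ₂ : SL (n+1) ℤ) (δ : SL (n+1) ℤ), δ ∈ Δ →
      ∀ h₁ h₂ : SL (n+1) ℝ, h₁ ∈ stab n ℝ → h₂ ∈ stab n ℝ →
      ∀ y : ℝ, 0 < y →
      ((mapSL n (δ * γ₁) : SL (n+1) ℝ) : Matrix (Fin (n+1)) (Fin (n+1)) ℝ)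
          * ((h₁ : SL (n+1) ℝ) : Matrix (Fin (n+1)) (Fin (n+1)) ℝ)
        = ((mapSL n γ₂ : SL (n+1) ℝ) : Matrix (Fin (n+1)) (Fin (n+1)) ℝ)
          * ((h₂ : SL (n+1) ℝ) : Matrix (Fin (n+1)) (Fin (n+1)) ℝ) * aMat n y →
      y = 1 ∧ γ₂⁻¹ * δ * γ₁ ∈ stab n ℤ)
    ∧ (∀ γ₁ γ₂ : SL (n+1) ℤ,
        (S γ₁ = S γ₂ ∨ Disjoint (S γ₁) (S γ₂))
        ∧ (S γ₁ = S γ₂ ↔ ∃ γt ∈ stab n ℤ, ∃ δ ∈ Δ, γ₁ = δ * γ₂ * γt)) := by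
  refine ⟨fun γ₁ γ₂ δ _ h₁ h₂ hh₁ hh₂ y hy E => ?_,
    fun γ₁ γ₂ => ⟨cosetHa_eq_or_disjoint Δ γ₁ γ₂, cosetHa_eq_iff Δ⟩⟩
  rw [mul_assoc _ _ (aMat n y)] at E
  simpa only [mul_assoc] using
    eq_one_and_mem_stab_of_mul_eq_mul_aMat hh₁ hh₂ hy (mapSL_inv_mul_eq_of_mul_eq E)

/-- If δγ₁h₁ = γ₂h₂a(y) with δ ∈ Δ, h₁,h₂ ∈ H, y > 0, then y = 1 and γ₂⁻¹δγ₁ ∈ Γ_H.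
Consequently the sets Δγ₁H_a and Δγ₂H_a are equal or disjoint, and they coincide
exactly when Δγ₁ = Δγ₂γ̃ for some γ̃ ∈ Γ_H. -/
theorem stmt8 (n : ℕ) (hn : 1 ≤ n) (Δ : Subgroup (SL (n+1) ℤ)) :
    let S : SL (n+1) ℤ → Set (Matrix (Fin (n+1)) (Fin (n+1)) ℝ) := fun γ =>
      {A | ∃ δ ∈ Δ, ∃ h ∈ stab n ℝ, ∃ y : ℝ, 1 ≤ y ∧
        A = ((mapSL n (δ * γ) : SL (n+1) ℝ) : Matrix (Fin (n+1)) (Fin (n+1)) ℝ)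
              * ((h : SL (n+1) ℝ) : Matrix (Fin (n+1)) (Fin (n+1)) ℝ) * aMat n y}
    (∀ (γ₁ γ₂ : SL (n+1) ℤ) (δ : SL (n+1) ℤ), δ ∈ Δ →
      ∀ h₁ h₂ : SL (n+1) ℝ, h₁ ∈ stab n ℝ → h₂ ∈ stab n ℝ →
      ∀ y : ℝ, 0 < y →
      ((mapSL n (δ * γ₁) : SL (n+1) ℝ) : Matrix (Fin (n+1)) (Fin (n+1)) ℝ)
          * ((h₁ : SL (n+1) ℝ) : Matrix (Fin (n+1)) (Fin (n+1)) ℝ)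
        = ((mapSL n γ₂ : SL (n+1) ℝ) : Matrix (Fin (n+1)) (Fin (n+1)) ℝ)
          * ((h₂ : SL (n+1) ℝ) : Matrix (Fin (n+1)) (Fin (n+1)) ℝ) * aMat n y →
      y = 1 ∧ γ₂⁻¹ * δ * γ₁ ∈ stab n ℤ)
    ∧ (∀ γ₁ γ₂ : SL (n+1) ℤ,
        (S γ₁ = S γ₂ ∨ Disjoint (S γ₁) (S γ₂))
        ∧ (S γ₁ = S γ₂ ↔ ∃ γt ∈ stab n ℤ, ∃ δ ∈ Δ, γ₁ = δ * γ₂ * γt)) :=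
  stmt8_general n Δ
end
end

section
/- If M ∈ SL(n+1,ℝ) can be written as h_2 a(y) h_1^{-1} with h_1, h_2 ∈ H and y > 0, and M has integer entries with determinant 1 (i.e., M ∈ SL(n+1,ℤ)), then y = 1 and M ∈ Γ_H. -/
open Matrix

noncomputable section

/-- If M = h₂ a(y) h₁⁻¹ with h₁,h₂ ∈ H and y > 0, and M has integer entries
(and determinant 1), then y = 1 and M ∈ Γ_H. -/
theorem stmt9 (n : ℕ) (hn : 1 ≤ n) (M : SL (n+1) ℝ)
    (hint : ∀ i j, ∃ k : ℤ, (M : Matrix (Fin (n+1)) (Fin (n+1)) ℝ) i j = (k : ℝ))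
    (h₁ h₂ : SL (n+1) ℝ) (hh₁ : h₁ ∈ stab n ℝ) (hh₂ : h₂ ∈ stab n ℝ)
    (y : ℝ) (hy : 0 < y)
    (hM : (M : Matrix (Fin (n+1)) (Fin (n+1)) ℝ)
        = ((h₂ : SL (n+1) ℝ) : Matrix (Fin (n+1)) (Fin (n+1)) ℝ) * aMat n y
            * ((h₁⁻¹ : SL (n+1) ℝ) : Matrix (Fin (n+1)) (Fin (n+1)) ℝ)) :
    y = 1 ∧ M ∈ stab n ℝ := by
  classical
  -- the inverse of aMat n y is aMat n y⁻¹
  have hAA : ∀ z : ℝ, 0 < z → aMat n z * aMat n z⁻¹ = 1 := by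
    intro z hz
    have hone : z ^ ((n : ℝ)⁻¹) * (z⁻¹) ^ ((n : ℝ)⁻¹) = 1 := by
      rw [← Real.mul_rpow hz.le (inv_nonneg.mpr hz.le), mul_inv_cancel₀ hz.ne', Real.one_rpow]
    ext i j
    simp only [aMat, Matrix.diagonal_mul_diagonal, Matrix.diagonal_apply, Matrix.one_apply]
    by_cases h : i = j
    · subst h
      by_cases h2 : i = Fin.last n <;> simp [h2, inv_mul_cancel₀ hz.ne', hone]
    · simp [h]
  have hvA : ∀ z : ℝ, lastVec n ℝ ᵥ* aMat n z = z⁻¹ • lastVec n ℝ := by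
    intro z
    funext j
    rw [aMat, Matrix.vecMul_diagonal]
    simp only [lastVec, Pi.smul_apply, Pi.single_apply, smul_eq_mul]
    by_cases h : j = Fin.last n <;> simp [h]
  -- bottom row of M
  have hinv₁ : h₁⁻¹ ∈ stab n ℝ := (stab n ℝ).inv_mem hh₁
  have hrow : lastVec n ℝ ᵥ* (M : Matrix (Fin (n+1)) (Fin (n+1)) ℝ) = y⁻¹ • lastVec n ℝ := by
    rw [hM, ← Matrix.vecMul_vecMul, ← Matrix.vecMul_vecMul, hh₂, hvA,
      Matrix.smul_vecMul, hinv₁]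
  -- the candidate inverse X
  set X : Matrix (Fin (n+1)) (Fin (n+1)) ℝ :=
    ((h₁ : SL (n+1) ℝ) : Matrix (Fin (n+1)) (Fin (n+1)) ℝ) * aMat n y⁻¹
      * ((h₂⁻¹ : SL (n+1) ℝ) : Matrix (Fin (n+1)) (Fin (n+1)) ℝ) with hX
  have h11 : ((h₁⁻¹ : SL (n+1) ℝ) : Matrix (Fin (n+1)) (Fin (n+1)) ℝ)
      * ((h₁ : SL (n+1) ℝ) : Matrix (Fin (n+1)) (Fin (n+1)) ℝ) = 1 := by
    rw [← Matrix.SpecialLinearGroup.coe_mul, inv_mul_cancel, Matrix.SpecialLinearGroup.coe_one]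
  have h22 : ((h₂ : SL (n+1) ℝ) : Matrix (Fin (n+1)) (Fin (n+1)) ℝ)
      * ((h₂⁻¹ : SL (n+1) ℝ) : Matrix (Fin (n+1)) (Fin (n+1)) ℝ) = 1 := by
    rw [← Matrix.SpecialLinearGroup.coe_mul, mul_inv_cancel, Matrix.SpecialLinearGroup.coe_one]
  have hMX : (M : Matrix (Fin (n+1)) (Fin (n+1)) ℝ) * X = 1 := by
    rw [hM, hX]
    simp only [mul_assoc]
    rw [← mul_assoc ((h₁⁻¹ : SL (n+1) ℝ) : Matrix (Fin (n+1)) (Fin (n+1)) ℝ)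
      ((h₁ : SL (n+1) ℝ) : Matrix (Fin (n+1)) (Fin (n+1)) ℝ), h11, one_mul,
      ← mul_assoc (aMat n y) (aMat n y⁻¹), hAA y hy, one_mul, h22]
  have hinv₂ : h₂⁻¹ ∈ stab n ℝ := (stab n ℝ).inv_mem hh₂
  have hrowX : lastVec n ℝ ᵥ* X = y • lastVec n ℝ := by
    rw [hX, ← Matrix.vecMul_vecMul, ← Matrix.vecMul_vecMul, hh₁, hvA,
      Matrix.smul_vecMul, hinv₂, inv_inv]
  -- evaluate at the last index
  have heval : ∀ A : Matrix (Fin (n+1)) (Fin (n+1)) ℝ,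
      (lastVec n ℝ ᵥ* A) (Fin.last n) = A (Fin.last n) (Fin.last n) := by
    intro A
    simp [lastVec, Matrix.single_vecMul]
  have hlastVec : lastVec n ℝ (Fin.last n) = 1 := by simp [lastVec]
  have hMll : (M : Matrix (Fin (n+1)) (Fin (n+1)) ℝ) (Fin.last n) (Fin.last n) = y⁻¹ := by
    have := congrFun hrow (Fin.last n)
    rwa [heval, Pi.smul_apply, hlastVec, smul_eq_mul, mul_one] at this
  have hXll : X (Fin.last n) (Fin.last n) = y := by
    have := congrFun hrowX (Fin.last n)
    rwa [heval, Pi.smul_apply, hlastVec, smul_eq_mul, mul_one] at this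
  -- integrality
  set N : Matrix (Fin (n+1)) (Fin (n+1)) ℤ := fun i j => (hint i j).choose with hN
  have hMN : (M : Matrix (Fin (n+1)) (Fin (n+1)) ℝ) = (Int.castRingHom ℝ).mapMatrix N := by
    funext i j
    simpa [RingHom.mapMatrix_apply, Matrix.map_apply] using (hint i j).choose_spec
  have hdetM : (M : Matrix (Fin (n+1)) (Fin (n+1)) ℝ).det = 1 := M.2
  have hXadj : X = ((M : Matrix (Fin (n+1)) (Fin (n+1)) ℝ)).adjugate := by
    have h1 : (M : Matrix (Fin (n+1)) (Fin (n+1)) ℝ)⁻¹ = X := Matrix.inv_eq_right_inv hMX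
    have h2 : (M : Matrix (Fin (n+1)) (Fin (n+1)) ℝ)⁻¹
        = (M : Matrix (Fin (n+1)) (Fin (n+1)) ℝ).adjugate := by
      apply Matrix.inv_eq_right_inv
      rw [Matrix.mul_adjugate, hdetM, one_smul]
    rw [← h1, h2]
  have hXint : X (Fin.last n) (Fin.last n)
      = ((N.adjugate (Fin.last n) (Fin.last n) : ℤ) : ℝ) := by
    rw [hXadj, hMN, ← RingHom.map_adjugate]
    simp [RingHom.mapMatrix_apply, Matrix.map_apply]
  -- y and y⁻¹ are positive integers multiplying to 1
  obtain ⟨k₁, hk₁⟩ := hint (Fin.last n) (Fin.last n)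
  set k₂ : ℤ := N.adjugate (Fin.last n) (Fin.last n) with hk₂def
  have hk₂ : y = (k₂ : ℝ) := by rw [← hXll, hXint]
  have hk₁' : y⁻¹ = (k₁ : ℝ) := by rw [← hMll, hk₁]
  have hprod : (k₁ : ℝ) * (k₂ : ℝ) = 1 := by
    rw [← hk₁', ← hk₂, inv_mul_cancel₀ hy.ne']
  have hprodZ : k₁ * k₂ = 1 := by exact_mod_cast hprod
  have hk₂pos : 0 < k₂ := by
    have : (0 : ℝ) < (k₂ : ℝ) := hk₂ ▸ hy
    exact_mod_cast this
  have hk₁pos : 0 < k₁ := by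
    have : (0 : ℝ) < (k₁ : ℝ) := hk₁' ▸ inv_pos.mpr hy
    exact_mod_cast this
  have hk₂1 : k₂ = 1 := by nlinarith
  have hy1 : y = 1 := by rw [hk₂, hk₂1]; norm_num
  refine ⟨hy1, ?_⟩
  show lastVec n ℝ ᵥ* (M : Matrix (Fin (n+1)) (Fin (n+1)) ℝ) = lastVec n ℝ
  rw [hrow, hy1, inv_one, one_smul]
end
end

section
/- Let Δ be a finite index subgroup of SL(n+1,ℤ) and γ ∈ SL(n+1,ℤ). Then the set Δ\ΔγH_a is a closed subset of the quotient Δ\SL(n+1,ℝ). Specifically, if a sequence Δγh_j a(y_j) with h_j ∈ H and y_j ≥ 1 converges in Δ\SL(n+1,ℝ) to Δg, then Δg ∈ Δ\ΔγH_a. -/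
open Matrix

noncomputable section

/-! A matrix `g` lies in `ΔγH_a` iff for some `δ ∈ Δ` the integer row vector
`v = e_{n+1} (δγ)⁻¹` satisfies `v g ∈ [0,1] • e_{n+1}` (the value `0` is excluded automatically,
`g` being invertible). For fixed `v` this is a closed condition on `g`, and near any `g₀` only
finitely many integer vectors `v` satisfy it, since `v = (v g) g⁻¹` then ranges over a compact set.
So the set is a locally finite union of closed sets, hence closed; it is invariant under left
multiplication by `Δ`, so its image in `Δ\SL(n+1,ℝ)` is closed too. -/

namespace Matrix.SpecialLinearGroup

variable {ι R : Type*} [Fintype ι] [DecidableEq ι] [CommRing R]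

lemma vecMul_coe_vecMul_coe_inv (g : SpecialLinearGroup ι R) (v : ι → R) :
    (v ᵥ* (g : Matrix ι ι R)) ᵥ* ((g⁻¹ : SpecialLinearGroup ι R) : Matrix ι ι R) = v := by
  rw [vecMul_vecMul, ← coe_mul, mul_inv_cancel, coe_one, vecMul_one]

lemma coe_eq_coe_mul_iff (M g : SpecialLinearGroup ι R) (B : Matrix ι ι R) :
    (g : Matrix ι ι R) = M * B ↔ ((M⁻¹ * g : SpecialLinearGroup ι R) : Matrix ι ι R) = B := by
  rw [coe_mul]
  constructor
  · intro h
    rw [h, ← Matrix.mul_assoc, ← coe_mul, inv_mul_cancel, coe_one, Matrix.one_mul]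
  · intro h
    rw [← h, ← Matrix.mul_assoc, ← coe_mul, mul_inv_cancel, coe_one, Matrix.one_mul]

lemma vecMul_coe_ne_zero (g : SpecialLinearGroup ι R) {v : ι → R} (hv : v ≠ 0) :
    v ᵥ* (g : Matrix ι ι R) ≠ 0 := by
  intro h
  rw [← vecMul_coe_vecMul_coe_inv g v, h, zero_vecMul] at hv
  exact hv rfl

end Matrix.SpecialLinearGroup

section IntegerRowVectors

variable {m : ℕ}

lemma isProperMap_intCast_comp : IsProperMap fun v : Fin m → ℤ => ((↑) : ℤ → ℝ) ∘ v :=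
  IsProperMap.pi_map fun _ => Int.isClosedEmbedding_coe_real.isProperMap

lemma locallyFinite_setOf_intCast_vecMul_mem {K : Set (Fin m → ℝ)} (hK : IsCompact K) :
    LocallyFinite fun v : Fin m → ℤ =>
      {g : SL m ℝ | ((↑) ∘ v : Fin m → ℝ) ᵥ* (g : Matrix (Fin m) (Fin m) ℝ) ∈ K} := by
  intro g₀
  have : WeaklyLocallyCompactSpace (Matrix (Fin m) (Fin m) ℝ) :=
    inferInstanceAs (WeaklyLocallyCompactSpace (Fin m → Fin m → ℝ))
  obtain ⟨L, hL, hL₀⟩ := exists_compact_mem_nhds ((g₀⁻¹ : SL m ℝ) : Matrix (Fin m) (Fin m) ℝ)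
  have hinv : Continuous fun g : SL m ℝ => ((g⁻¹ : SL m ℝ) : Matrix (Fin m) (Fin m) ℝ) := by
    simpa only [Matrix.SpecialLinearGroup.coe_inv] using continuous_induced_dom.matrix_adjugate
  refine ⟨_, hinv.continuousAt.preimage_mem_nhds hL₀, ?_⟩
  have hKL : IsCompact
      ((fun p : (Fin m → ℝ) × Matrix (Fin m) (Fin m) ℝ => p.1 ᵥ* p.2) '' K ×ˢ L) :=
    (hK.prod hL).image (continuous_fst.matrix_vecMul continuous_snd)
  refine (isProperMap_intCast_comp.isCompact_preimage hKL).finite_of_discrete.subset ?_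
  rintro v ⟨g, hgK, hgL⟩
  exact ⟨(_, _), ⟨hgK, hgL⟩, Matrix.SpecialLinearGroup.vecMul_coe_vecMul_coe_inv g _⟩

theorem isClosed_setOf_exists_intCast_vecMul_mem {ι : Type*} (v : ι → Fin m → ℤ)
    {K : Set (Fin m → ℝ)} (hK : IsCompact K) :
    IsClosed {g : SL m ℝ | ∃ i, ((↑) ∘ v i : Fin m → ℝ) ᵥ* (g : Matrix (Fin m) (Fin m) ℝ) ∈ K} := by
  have hunion : {g : SL m ℝ | ∃ i, ((↑) ∘ v i : Fin m → ℝ) ᵥ* (g : Matrix (Fin m) (Fin m) ℝ) ∈ K}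
      = ⋃ w : Set.range v, {g : SL m ℝ |
          ((↑) ∘ (w : Fin m → ℤ) : Fin m → ℝ) ᵥ* (g : Matrix (Fin m) (Fin m) ℝ) ∈ K} := by
    ext g
    simp
  rw [hunion]
  exact ((locallyFinite_setOf_intCast_vecMul_mem hK).comp_injective
    Subtype.val_injective).isClosed_iUnion
      fun _ => hK.isClosed.preimage (continuous_const.matrix_vecMul continuous_induced_dom)

end IntegerRowVectors

section DiagonalFlow

variable {n : ℕ}

lemma lastVec_ne_zero : lastVec n ℝ ≠ 0 :=
  Pi.single_ne_zero_iff.mpr one_ne_zero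

lemma det_aMat (hn : n ≠ 0) {y : ℝ} (hy : 0 < y) : (aMat n y).det = 1 := by
  simp only [aMat, det_diagonal, Fin.prod_univ_castSucc, (Fin.castSucc_lt_last _).ne, if_false,
    if_true, Finset.prod_const, Finset.card_univ, Fintype.card_fin]
  rw [← Real.rpow_natCast, ← Real.rpow_mul hy.le, inv_mul_cancel₀ (Nat.cast_ne_zero.mpr hn),
    Real.rpow_one, mul_inv_cancel₀ hy.ne']

lemma exists_mem_stab_coe_eq_mul_aMat_iff (hn : n ≠ 0) {y : ℝ} (hy : 0 < y) (x : SL (n+1) ℝ) :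
    (∃ h ∈ stab n ℝ, (x : Matrix (Fin (n+1)) (Fin (n+1)) ℝ) = h * aMat n y) ↔
      lastVec n ℝ ᵥ* (x : Matrix (Fin (n+1)) (Fin (n+1)) ℝ) = y⁻¹ • lastVec n ℝ := by
  constructor
  · rintro ⟨h, hh, hx⟩
    rw [hx, ← vecMul_vecMul, hh, lastVec_vecMul_aMat]
  · intro hx
    obtain ⟨A, hA⟩ : ∃ A : SL (n+1) ℝ, (A : Matrix (Fin (n+1)) (Fin (n+1)) ℝ) = aMat n y :=
      ⟨⟨aMat n y, det_aMat hn hy⟩, rfl⟩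
    refine ⟨x * A⁻¹, ?_, ?_⟩
    · change lastVec n ℝ ᵥ* _ = _
      rw [Matrix.SpecialLinearGroup.coe_mul, ← vecMul_vecMul, hx, ← lastVec_vecMul_aMat, ← hA,
        Matrix.SpecialLinearGroup.vecMul_coe_vecMul_coe_inv]
    · rw [← hA, ← Matrix.SpecialLinearGroup.coe_mul, inv_mul_cancel_right]

lemma exists_mem_stab_one_le_aMat_iff (hn : n ≠ 0) (x : SL (n+1) ℝ) :
    (∃ h ∈ stab n ℝ, ∃ y : ℝ, 1 ≤ y ∧ (x : Matrix (Fin (n+1)) (Fin (n+1)) ℝ) = h * aMat n y) ↔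
      lastVec n ℝ ᵥ* (x : Matrix (Fin (n+1)) (Fin (n+1)) ℝ) ∈
        (· • lastVec n ℝ) '' Set.Icc (0 : ℝ) 1 := by
  constructor
  · rintro ⟨h, hh, y, hy, hx⟩
    have hy₀ : 0 < y := zero_lt_one.trans_le hy
    refine ⟨y⁻¹, ⟨inv_nonneg.mpr hy₀.le, inv_le_one_of_one_le₀ hy⟩, ?_⟩
    exact ((exists_mem_stab_coe_eq_mul_aMat_iff hn hy₀ x).mp ⟨h, hh, hx⟩).symm
  · rintro ⟨t, ⟨ht₀, ht₁⟩, hxt⟩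
    have ht : 0 < t := by
      refine ht₀.lt_of_ne fun h => ?_
      subst h
      exact Matrix.SpecialLinearGroup.vecMul_coe_ne_zero x lastVec_ne_zero
        (by simpa using hxt.symm)
    obtain ⟨h, hh, hx⟩ := (exists_mem_stab_coe_eq_mul_aMat_iff hn (inv_pos.mpr ht) x).mpr
      (by rw [inv_inv]; exact hxt.symm)
    exact ⟨h, hh, t⁻¹, one_le_inv₀ ht |>.mpr ht₁, hx⟩

lemma lastVec_vecMul_coe_mapSL_inv_mul (M : SL (n+1) ℤ) (g : SL (n+1) ℝ) :
    lastVec n ℝ ᵥ* (((mapSL n M)⁻¹ * g : SL (n+1) ℝ) : Matrix (Fin (n+1)) (Fin (n+1)) ℝ) =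
      ((↑) ∘ (lastVec n ℤ ᵥ* ((M⁻¹ : SL (n+1) ℤ) : Matrix (Fin (n+1)) (Fin (n+1)) ℤ)) :
        Fin (n+1) → ℝ) ᵥ* (g : Matrix (Fin (n+1)) (Fin (n+1)) ℝ) := by
  rw [Matrix.SpecialLinearGroup.coe_mul, ← vecMul_vecMul, ← map_inv]
  congr 1
  ext i
  change _ = Int.castRingHom ℝ ((lastVec n ℤ ᵥ* _) i)
  rw [Matrix.SpecialLinearGroup.map_apply_coe, RingHom.mapMatrix_apply, RingHom.map_vecMul]
  congr 2
  ext j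
  by_cases hj : j = Fin.last n <;> simp [lastVec, hj]

end DiagonalFlow

theorem QuotientGroup.isClosed_image_mk_rightRel {G : Type*} [Group G] [TopologicalSpace G]
    (H : Subgroup G) {S : Set G} (hS : IsClosed S) (hHS : ∀ h ∈ H, ∀ g ∈ S, h * g ∈ S) :
    IsClosed (Quotient.mk (QuotientGroup.rightRel H) '' S) := by
  rw [← (isQuotientMap_quotient_mk' (s := QuotientGroup.rightRel H)).isClosed_preimage]
  convert hS
  refine (Set.subset_preimage_image _ _).antisymm' ?_
  rintro x ⟨g, hg, hgx⟩
  have hxg : x * g⁻¹ ∈ H := QuotientGroup.rightRel_apply.mp (Quotient.exact hgx)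
  simpa using hHS _ hxg g hg

theorem stmt10_general (n : ℕ) (hn : 1 ≤ n) (Δ : Subgroup (SL (n+1) ℤ))
    (γ : SL (n+1) ℤ) :
    let Δ' : Subgroup (SL (n+1) ℝ) := Δ.map (mapSL n)
    let S : Set (SL (n+1) ℝ) :=
      {g | ∃ δ ∈ Δ, ∃ h ∈ stab n ℝ, ∃ y : ℝ, 1 ≤ y ∧
        (g : Matrix (Fin (n+1)) (Fin (n+1)) ℝ)
          = ((mapSL n (δ * γ) : SL (n+1) ℝ) : Matrix (Fin (n+1)) (Fin (n+1)) ℝ)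
              * ((h : SL (n+1) ℝ) : Matrix (Fin (n+1)) (Fin (n+1)) ℝ) * aMat n y}
    IsClosed (Quotient.mk (QuotientGroup.rightRel Δ') '' S) := by
  intro Δ' S
  have hS : S = {g : SL (n+1) ℝ | ∃ δ : Δ, ((↑) ∘ (lastVec n ℤ ᵥ*
      (((δ * γ)⁻¹ : SL (n+1) ℤ) : Matrix (Fin (n+1)) (Fin (n+1)) ℤ)) : Fin (n+1) → ℝ) ᵥ*
        (g : Matrix (Fin (n+1)) (Fin (n+1)) ℝ) ∈ (· • lastVec n ℝ) '' Set.Icc (0 : ℝ) 1} := by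
    ext g
    simp only [S, Set.mem_ofPred_eq, Subtype.exists, exists_prop]
    refine exists_congr fun δ => and_congr_right fun _ => ?_
    simp_rw [Matrix.mul_assoc, Matrix.SpecialLinearGroup.coe_eq_coe_mul_iff (mapSL n (δ * γ))]
    simpa only [lastVec_vecMul_coe_mapSL_inv_mul] using
      exists_mem_stab_one_le_aMat_iff (Nat.one_le_iff_ne_zero.mp hn) ((mapSL n (δ * γ))⁻¹ * g)
  refine QuotientGroup.isClosed_image_mk_rightRel Δ' ?_ ?_
  · rw [hS]
    exact isClosed_setOf_exists_intCast_vecMul_mem _ (isCompact_Icc.image (by fun_prop))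
  · rintro _ ⟨δ₀, hδ₀, rfl⟩ g ⟨δ, hδ, h, hh, y, hy, hg⟩
    refine ⟨δ₀ * δ, mul_mem hδ₀ hδ, h, hh, y, hy, ?_⟩
    rw [Matrix.SpecialLinearGroup.coe_mul, hg]
    simp only [map_mul, Matrix.SpecialLinearGroup.coe_mul, Matrix.mul_assoc]

/-- For a finite index subgroup Δ ⊆ SL(n+1,ℤ) and γ ∈ SL(n+1,ℤ), the image of the
set ΔγH_a in the quotient Δ\SL(n+1,ℝ) is closed. -/
theorem stmt10 (n : ℕ) (hn : 1 ≤ n) (Δ : Subgroup (SL (n+1) ℤ)) (hΔ : Δ.FiniteIndex)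
    (γ : SL (n+1) ℤ) :
    let Δ' : Subgroup (SL (n+1) ℝ) := Δ.map (mapSL n)
    let S : Set (SL (n+1) ℝ) :=
      {g | ∃ δ ∈ Δ, ∃ h ∈ stab n ℝ, ∃ y : ℝ, 1 ≤ y ∧
        (g : Matrix (Fin (n+1)) (Fin (n+1)) ℝ)
          = ((mapSL n (δ * γ) : SL (n+1) ℝ) : Matrix (Fin (n+1)) (Fin (n+1)) ℝ)
              * ((h : SL (n+1) ℝ) : Matrix (Fin (n+1)) (Fin (n+1)) ℝ) * aMat n y}
    IsClosed (Quotient.mk (QuotientGroup.rightRel Δ') '' S) :=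
  stmt10_general n hn Δ γ
end
end

section
/- Let C ⊆ SL(n+1,ℝ) be compact and θ ∈ (0,1). Then there exists ε₀ > 0 such that for all 0 < ε ≤ ε₀, the sets H_ε(a) = {M ∈ SL(n+1,ℝ) : aM ∈ C_{θ,ε}}, indexed by primitive vectors a ∈ ℤ^{n+1}, are pairwise disjoint on the set Γ·C (products γC with γ ∈ SL(n+1,ℤ), C ∈ C). That is, for M ∈ Γ·C, at most one primitive vector a satisfies aM ∈ C_{θ,ε}. -/
/-!
Write `M = γ c` with `γ ∈ SL(n+1,ℤ)` and `c` in the compact set `C`, and replace `a, b` by the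
primitive vectors `p = aγ`, `q = bγ`, so that `x = pc` and `y = qc` lie in the truncated cone
`C_{θ,ε}`. With `α, β` the last coordinates of `x, y`, the vector `βx - αy` has last
coordinate `0` and the others of size `O(ε)`; since the entries of `c⁻¹` are bounded uniformly
on `C`, so is `βp - αq = (βx - αy)c⁻¹`, while `q` is bounded. Hence
`β (p_i q_j - p_j q_i)` is `O(ε) < θ ≤ β`, so every `2 × 2` minor of the integer vectors
`p, q` vanishes and, both being primitive, `p = ±q`. The sign is `+` because `α, β > 0`.
-/

open Matrix

noncomputable section

/-- The Euclidean norm on ℝ^n. -/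
def euclidEnorm {n : ℕ} (v : Fin n → ℝ) : ℝ := Real.sqrt (∑ i, (v i)^2)

def truncatedCone (n : ℕ) (θ ε : ℝ) : Set (Fin (n+1) → ℝ) :=
  {v | euclidEnorm (fun i : Fin n => v i.castSucc) ≤ ε * v (Fin.last n) ∧
    θ ≤ v (Fin.last n) ∧ v (Fin.last n) ≤ 1}

section Gcd

variable {ι α : Type*} [Fintype ι] [CommRing α] [NormalizedGCDMonoid α]

theorem gcd_dvd_gcd_vecMul {κ : Type*} [Fintype κ] (v : ι → α) (A : Matrix ι κ α) :
    Finset.univ.gcd v ∣ Finset.univ.gcd (v ᵥ* A) :=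
  Finset.dvd_gcd fun _ _ =>
    Finset.dvd_sum fun j _ => (Finset.gcd_dvd (Finset.mem_univ j)).mul_right _

theorem gcd_vecMul_specialLinearGroup [DecidableEq ι] (v : ι → α)
    (γ : Matrix.SpecialLinearGroup ι α) :
    Finset.univ.gcd (v ᵥ* (γ : Matrix ι ι α)) = Finset.univ.gcd v := by
  refine dvd_antisymm_of_normalize_eq Finset.normalize_gcd Finset.normalize_gcd ?_
    (gcd_dvd_gcd_vecMul v (γ : Matrix ι ι α))
  have := gcd_dvd_gcd_vecMul (v ᵥ* (γ : Matrix ι ι α))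
    ((γ⁻¹ : Matrix.SpecialLinearGroup ι α) : Matrix ι ι α)
  rwa [vecMul_vecMul, ← Matrix.SpecialLinearGroup.coe_mul, mul_inv_cancel,
    Matrix.SpecialLinearGroup.coe_one, vecMul_one] at this

end Gcd

section Minors

variable {ι : Type*}

theorem eq_or_eq_neg_of_gcd_eq_one_of_minors [Fintype ι] {p q : ι → ℤ}
    (hp : Finset.univ.gcd p = 1) (hq : Finset.univ.gcd q = 1)
    (hpq : ∀ i j, p i * q j = p j * q i) : p = q ∨ p = -q := by
  obtain ⟨j, hj⟩ : ∃ j, q j ≠ 0 := by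
    by_contra! h
    simpa [hq] using Finset.gcd_eq_zero_iff.mpr fun i (_ : i ∈ Finset.univ) => h i
  have hnorm : normalize (q j) = normalize (p j) :=
    calc normalize (q j) = Finset.univ.gcd (fun i => q j * p i) := by
          rw [Finset.gcd_mul_left, hp, mul_one]
      _ = Finset.univ.gcd (fun i => p j * q i) :=
          Finset.gcd_congr rfl fun i _ => by rw [mul_comm, hpq]
      _ = normalize (p j) := by rw [Finset.gcd_mul_left, hq, mul_one]
  rcases Int.associated_iff.mp (normalize_eq_normalize_iff_associated.mp hnorm) with h | h
  · exact .inl <| funext fun i => mul_right_cancel₀ hj <| by rw [hpq, h, mul_comm]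
  · exact .inr <| funext fun i => mul_right_cancel₀ hj <| by rw [hpq, h]; simp [mul_comm]

theorem mul_eq_mul_of_abs_sub_le {p q : ι → ℤ} {α β δ B : ℝ}
    (hq : ∀ i, |(q i : ℝ)| ≤ B) (hpq : ∀ i, |β * p i - α * q i| ≤ δ)
    (hδB : 2 * δ * B < β) (i j : ι) :
    p i * q j = p j * q i := by
  have hterm : ∀ k l, |(β * p k - α * q k) * q l| ≤ δ * B := fun k l => by
    rw [abs_mul]
    exact mul_le_mul (hpq k) (hq l) (abs_nonneg _) ((abs_nonneg _).trans (hpq k))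
  have hβ : 0 < β := by
    linarith [(abs_nonneg _).trans (hterm i j), abs_nonneg ((β * p i - α * q i) * q j)]
  have hminor : β * |((p i * q j - p j * q i : ℤ) : ℝ)| < β * 1 := by
    calc β * |((p i * q j - p j * q i : ℤ) : ℝ)|
        = |β * ((p i * q j - p j * q i : ℤ) : ℝ)| := by rw [abs_mul, abs_of_pos hβ]
      _ = |(β * p i - α * q i) * q j - (β * p j - α * q j) * q i| := by
          congr 1; push_cast; ring
      _ ≤ δ * B + δ * B := (abs_sub _ _).trans (add_le_add (hterm i j) (hterm j i))
      _ < β * 1 := by linarith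
  have : |p i * q j - p j * q i| < 1 := by exact_mod_cast lt_of_mul_lt_mul_left hminor hβ.le
  exact sub_eq_zero.mp (Int.abs_lt_one_iff.mp this)

end Minors

theorem abs_vecMul_le {ι κ : Type*} [Fintype ι] {v : ι → ℝ} {A : Matrix ι κ ℝ}
    {s K : ℝ} (hv : ∀ j, |v j| ≤ s) (hA : ∀ j i, |A j i| ≤ K) (i : κ) :
    |(v ᵥ* A) i| ≤ Fintype.card ι * (s * K) := by
  calc |(v ᵥ* A) i| ≤ ∑ j, |v j * A j i| := Finset.abs_sum_le_sum_abs _ _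
    _ ≤ ∑ _j : ι, s * K := Finset.sum_le_sum fun j _ => by
        rw [abs_mul]
        exact mul_le_mul (hv j) (hA j i) (abs_nonneg _) ((abs_nonneg _).trans (hv j))
    _ = Fintype.card ι * (s * K) := by simp

theorem IsCompact.exists_abs_inv_entry_le {m : ℕ} {C : Set (SL m ℝ)} (hC : IsCompact C) :
    ∃ K > 0, ∀ c ∈ C, ∀ i j, |(c⁻¹ : SL m ℝ) i j| ≤ K := by
  have hinv : Continuous fun c : SL m ℝ => (↑c⁻¹ : Matrix (Fin m) (Fin m) ℝ) := by
    rw [funext fun c : SL m ℝ => Matrix.SpecialLinearGroup.coe_inv c]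
    exact continuous_induced_dom.matrix_adjugate
  let f : SL m ℝ → Fin m → Fin m → ℝ := fun c i j => (c⁻¹ : SL m ℝ) i j
  have hf : Continuous f := continuous_pi fun i => continuous_pi fun j => hinv.matrix_elem i j
  obtain ⟨K, hK⟩ := hC.exists_bound_of_continuousOn hf.continuousOn
  refine ⟨max K 1, by positivity, fun c hc i j => le_max_of_le_left ?_⟩
  exact ((norm_le_pi_norm (f c i) j).trans (norm_le_pi_norm (f c) i)).trans (hK c hc)

theorem abs_le_euclidEnorm {m : ℕ} (v : Fin m → ℝ) (j : Fin m) : |v j| ≤ euclidEnorm v := by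
  rw [euclidEnorm, ← Real.sqrt_sq_eq_abs]
  exact Real.sqrt_le_sqrt (Finset.single_le_sum
    (f := fun i => (v i) ^ 2) (fun i _ => sq_nonneg _) (Finset.mem_univ j))

section Cone

variable {n : ℕ} {θ ε : ℝ} {v w : Fin (n+1) → ℝ}

theorem abs_le_of_mem_truncatedCone (hv : v ∈ truncatedCone n θ ε) (j : Fin n) :
    |v j.castSucc| ≤ ε * v (Fin.last n) :=
  (abs_le_euclidEnorm (fun i : Fin n => v i.castSucc) j).trans hv.1

theorem abs_le_one_of_mem_truncatedCone (hθ : 0 ≤ θ) (hε : ε ≤ 1)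
    (hv : v ∈ truncatedCone n θ ε) (j : Fin (n+1)) : |v j| ≤ 1 := by
  have hv0 : 0 ≤ v (Fin.last n) := hθ.trans hv.2.1
  induction j using Fin.lastCases with
  | last => rw [abs_of_nonneg hv0]; exact hv.2.2
  | cast j => nlinarith [abs_le_of_mem_truncatedCone hv j, abs_nonneg (v j.castSucc), hv.2.2]

theorem abs_sub_le_of_mem_truncatedCone (hθ : 0 < θ) (hv : v ∈ truncatedCone n θ ε)
    (hw : w ∈ truncatedCone n θ ε) (j : Fin (n+1)) :
    |w (Fin.last n) * v j - v (Fin.last n) * w j| ≤ 2 * ε := by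
  have hv0 : 0 < v (Fin.last n) := hθ.trans_le hv.2.1
  have hw0 : 0 < w (Fin.last n) := hθ.trans_le hw.2.1
  have hε : 0 ≤ ε := nonneg_of_mul_nonneg_left ((Real.sqrt_nonneg _).trans hv.1) hv0
  induction j using Fin.lastCases with
  | last => rw [mul_comm, sub_self, abs_zero]; positivity
  | cast j =>
    have hvj := abs_le_of_mem_truncatedCone hv j
    have hwj := abs_le_of_mem_truncatedCone hw j
    calc |w (Fin.last n) * v j.castSucc - v (Fin.last n) * w j.castSucc|
        ≤ w (Fin.last n) * |v j.castSucc| + v (Fin.last n) * |w j.castSucc| := by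
          rw [← abs_of_pos hv0, ← abs_of_pos hw0, ← abs_mul, ← abs_mul, abs_of_pos hv0,
            abs_of_pos hw0]
          exact abs_sub _ _
      _ ≤ 2 * ε := by
          nlinarith [mul_le_mul_of_nonneg_left hvj hw0.le, mul_le_mul_of_nonneg_left hwj hv0.le,
            hv.2.2, hw.2.2, mul_nonneg hε hv0.le, mul_nonneg hε hw0.le]

theorem eq_of_vecMul_mem_truncatedCone {K : ℝ} (hθ : 0 < θ) (hε : ε ≤ 1)
    (hsmall : 4 * ε * ((n + 1) * K) ^ 2 < θ) {c : SL (n+1) ℝ}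
    (hK : ∀ i j, |(c⁻¹ : SL (n+1) ℝ) i j| ≤ K)
    {p q : Fin (n+1) → ℤ} (hp : Primitive p) (hq : Primitive q)
    (hpc : (fun i => (p i : ℝ)) ᵥ* (c : Matrix (Fin (n+1)) (Fin (n+1)) ℝ) ∈
      truncatedCone n θ ε)
    (hqc : (fun i => (q i : ℝ)) ᵥ* (c : Matrix (Fin (n+1)) (Fin (n+1)) ℝ) ∈
      truncatedCone n θ ε) :
    p = q := by
  set x := (fun i => (p i : ℝ)) ᵥ* (c : Matrix (Fin (n+1)) (Fin (n+1)) ℝ) with hx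
  set y := (fun i => (q i : ℝ)) ᵥ* (c : Matrix (Fin (n+1)) (Fin (n+1)) ℝ) with hy
  have hcancel : ∀ v : Fin (n+1) → ℝ,
      v ᵥ* (c : Matrix (Fin (n+1)) (Fin (n+1)) ℝ) ᵥ*
        ((c⁻¹ : SL (n+1) ℝ) : Matrix (Fin (n+1)) (Fin (n+1)) ℝ) = v := fun v => by
    rw [vecMul_vecMul, ← Matrix.SpecialLinearGroup.coe_mul, mul_inv_cancel,
      Matrix.SpecialLinearGroup.coe_one, vecMul_one]
  have hq_le : ∀ i, |(q i : ℝ)| ≤ (n + 1) * K := fun i => by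
    have h := abs_vecMul_le (abs_le_one_of_mem_truncatedCone hθ.le hε hqc) hK i
    rw [hy, hcancel, Fintype.card_fin] at h
    simpa using h
  have hpq_le : ∀ i, |y (Fin.last n) * p i - x (Fin.last n) * q i| ≤ (n + 1) * (2 * ε * K) :=
      fun i => by
    have h := abs_vecMul_le (abs_sub_le_of_mem_truncatedCone hθ hpc hqc) hK i
    rw [show (fun j => y (Fin.last n) * x j - x (Fin.last n) * y j) =
        y (Fin.last n) • x - x (Fin.last n) • y from rfl, sub_vecMul, smul_vecMul, smul_vecMul,
      hx, hy, hcancel, hcancel, Fintype.card_fin] at h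
    simpa using h
  have hminors := mul_eq_mul_of_abs_sub_le hq_le hpq_le <| by
    calc 2 * ((n + 1) * (2 * ε * K)) * ((n + 1) * K) = 4 * ε * ((n + 1) * K) ^ 2 := by ring
      _ < θ := hsmall
      _ ≤ y (Fin.last n) := hqc.2.1
  rcases eq_or_eq_neg_of_gcd_eq_one_of_minors hp hq hminors with h | h
  · exact h
  · have hxy : x = -y := by
      rw [hx, hy, ← neg_vecMul]
      congr 1
      ext i
      simp [h]
    have := congrFun hxy (Fin.last n)
    linarith [hpc.2.1, hqc.2.1, Pi.neg_apply y (Fin.last n)]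

end Cone

theorem intCast_vecMul_mapSL_mul {n : ℕ} (a : Fin (n+1) → ℤ) (γ : SL (n+1) ℤ)
    (c : SL (n+1) ℝ) :
    (fun i => (a i : ℝ)) ᵥ*
        ((mapSL n γ * c : SL (n+1) ℝ) : Matrix (Fin (n+1)) (Fin (n+1)) ℝ) =
      (fun i => ((a ᵥ* (γ : Matrix (Fin (n+1)) (Fin (n+1)) ℤ)) i : ℝ)) ᵥ*
        (c : Matrix (Fin (n+1)) (Fin (n+1)) ℝ) := by
  rw [Matrix.SpecialLinearGroup.coe_mul, ← vecMul_vecMul]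
  congr 1
  funext i
  exact (RingHom.map_vecMul (Int.castRingHom ℝ) _ a i).symm

theorem stmt15_general (n : ℕ) (C : Set (SL (n+1) ℝ)) (hC : IsCompact C)
    (θ : ℝ) (hθ : 0 < θ) :
    ∃ ε₀ > 0, ∀ ε : ℝ, 0 < ε → ε ≤ ε₀ →
      ∀ M : SL (n+1) ℝ, (∃ γ : SL (n+1) ℤ, ∃ c ∈ C, M = mapSL n γ * c) →
      ∀ a b : Fin (n+1) → ℤ, Primitive a → Primitive b →
        (let va : Fin (n+1) → ℝ :=
          Matrix.vecMul (fun i => (a i : ℝ)) (M : Matrix (Fin (n+1)) (Fin (n+1)) ℝ)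
         euclidEnorm (fun i : Fin n => va i.castSucc) ≤ ε * va (Fin.last n)
           ∧ θ ≤ va (Fin.last n) ∧ va (Fin.last n) ≤ 1) →
        (let vb : Fin (n+1) → ℝ :=
          Matrix.vecMul (fun i => (b i : ℝ)) (M : Matrix (Fin (n+1)) (Fin (n+1)) ℝ)
         euclidEnorm (fun i : Fin n => vb i.castSucc) ≤ ε * vb (Fin.last n)
           ∧ θ ≤ vb (Fin.last n) ∧ vb (Fin.last n) ≤ 1) →
        a = b := by
  obtain ⟨K, hK0, hK⟩ := hC.exists_abs_inv_entry_le
  have hD : 0 < 8 * ((n + 1) * K) ^ 2 := by positivity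
  refine ⟨min 1 (θ / (8 * ((n + 1) * K) ^ 2)), lt_min one_pos (div_pos hθ hD), ?_⟩
  rintro ε - hε M ⟨γ, c, hc, rfl⟩ a b ha hb haC hbC
  have hsmall : 4 * ε * ((n + 1) * K) ^ 2 < θ := by
    linarith [(le_div_iff₀ hD).mp (hε.trans (min_le_right _ _))]
  have hprim : ∀ v, Primitive v →
      Primitive (v ᵥ* (γ : Matrix (Fin (n+1)) (Fin (n+1)) ℤ)) :=
    fun v hv => (gcd_vecMul_specialLinearGroup v γ).trans hv
  rw [intCast_vecMul_mapSL_mul] at haC hbC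
  have hγ : IsUnit (γ : Matrix (Fin (n+1)) (Fin (n+1)) ℤ) := by
    rw [isUnit_iff_isUnit_det, γ.2]
    exact isUnit_one
  exact vecMul_injective_of_isUnit hγ <| eq_of_vecMul_mem_truncatedCone hθ
    (hε.trans (min_le_left _ _)) hsmall (hK c hc) (hprim a ha) (hprim b hb) haC hbC

/-- For a compact C ⊆ SL(n+1,ℝ) and θ ∈ (0,1), there is ε₀ > 0 such that for all
0 < ε ≤ ε₀ and M ∈ Γ·C, at most one primitive vector a satisfies aM ∈ C_{θ,ε}. -/
theorem stmt15 (n : ℕ) (hn : 1 ≤ n) (C : Set (SL (n+1) ℝ)) (hC : IsCompact C)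
    (θ : ℝ) (hθ : 0 < θ) (hθ1 : θ < 1) :
    ∃ ε₀ > 0, ∀ ε : ℝ, 0 < ε → ε ≤ ε₀ →
      ∀ M : SL (n+1) ℝ, (∃ γ : SL (n+1) ℤ, ∃ c ∈ C, M = mapSL n γ * c) →
      ∀ a b : Fin (n+1) → ℤ, Primitive a → Primitive b →
        (let va : Fin (n+1) → ℝ :=
          Matrix.vecMul (fun i => (a i : ℝ)) (M : Matrix (Fin (n+1)) (Fin (n+1)) ℝ)
         euclidEnorm (fun i : Fin n => va i.castSucc) ≤ ε * va (Fin.last n)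
           ∧ θ ≤ va (Fin.last n) ∧ va (Fin.last n) ≤ 1) →
        (let vb : Fin (n+1) → ℝ :=
          Matrix.vecMul (fun i => (b i : ℝ)) (M : Matrix (Fin (n+1)) (Fin (n+1)) ℝ)
         euclidEnorm (fun i : Fin n => vb i.castSucc) ≤ ε * vb (Fin.last n)
           ∧ θ ≤ vb (Fin.last n) ∧ vb (Fin.last n) ≤ 1) →
        a = b :=
  stmt15_general n C hC θ hθ
end
end

section
/- The number of Farey points of level Q in dimension n, i.e. #{p/q ∈ ℝ^n/ℤ^n : (p,q) ∈ ℤ^{n+1} primitive, 1 ≤ q ≤ Q}, is asymptotic to Q^{n+1}/((n+1)ζ(n+1)) as Q → ∞; equivalently, the number of primitive vectors (p,q) ∈ ℤ^{n+1} with 0 ≤ p_i < q for all i and 1 ≤ q ≤ Q is asymptotic to Q^{n+1}/((n+1)ζ(n+1)). -/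
open Matrix

noncomputable section

/-!
Möbius inversion over the gcd of the coordinates writes the number of primitive points
`(p, q)` with `0 ≤ pᵢ < q ≤ Q` as `∑_{d ≤ Q} μ(d) B(⌊Q/d⌋)`, where `B(M) = ∑_{q ≤ M} q^n`
counts all lattice points of that shape, and `M^{n+1} ≤ (n+1) B(M) ≤ (M+1)^{n+1}`. Divided by
`Q^{n+1}`, the `d`-th term tends to `μ(d) / ((n+1) d^{n+1})` and is bounded by `d^{-(n+1)}`, so
Tannery's theorem gives the limit `(∑ μ(d)/d^{n+1}) / (n+1) = 1 / ((n+1) ζ(n+1))`.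
-/

open Finset Filter Topology ArithmeticFunction
open scoped ArithmeticFunction.Moebius ArithmeticFunction.zeta

namespace Nat

theorem pow_add_mul_pow_le_add_one_pow (m n : ℕ) :
    m ^ (n + 1) + (n + 1) * m ^ n ≤ (m + 1) ^ (n + 1) := by
  induction n with
  | zero => simp
  | succ n ih =>
    calc m ^ (n + 2) + (n + 2) * m ^ (n + 1)
        ≤ (m ^ (n + 1) + (n + 1) * m ^ n) * (m + 1) := by ring_nf; omega
      _ ≤ (m + 1) ^ (n + 2) := by rw [pow_succ _ (n + 1)]; gcongr

theorem add_one_pow_le_pow_add_mul_pow (m n : ℕ) :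
    (m + 1) ^ (n + 1) ≤ m ^ (n + 1) + (n + 1) * (m + 1) ^ n := by
  induction n with
  | zero => simp
  | succ n ih =>
    have : m ^ (n + 1) ≤ (m + 1) ^ (n + 1) := Nat.pow_le_pow_left m.le_succ _
    calc (m + 1) ^ (n + 2) ≤ (m ^ (n + 1) + (n + 1) * (m + 1) ^ n) * (m + 1) := by
          rw [pow_succ _ (n + 1)]; gcongr
      _ = m ^ (n + 2) + m ^ (n + 1) + (n + 1) * (m + 1) ^ (n + 1) := by ring
      _ ≤ m ^ (n + 2) + (n + 2) * (m + 1) ^ (n + 1) := by linarith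

end Nat

namespace ArithmeticFunction

theorem sum_divisors_moebius (m : ℕ) : ∑ d ∈ m.divisors, μ d = if m = 1 then 1 else 0 := by
  simpa only [coe_mul_zeta_apply, ArithmeticFunction.one_apply] using
    congr($moebius_mul_coe_zeta m)

theorem card_filter_eq_one_eq_sum_moebius {α : Type*} (s : Finset α) (g : α → ℕ) (D : ℕ)
    (hg : ∀ v ∈ s, 0 < g v ∧ g v ≤ D) :
    (#{v ∈ s | g v = 1} : ℤ) = ∑ d ∈ Icc 1 D, μ d * #{v ∈ s | d ∣ g v} := by
  have hdivisors : ∀ v ∈ s, (g v).divisors = {d ∈ Icc 1 D | d ∣ g v} := by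
    intro v hv
    ext d
    simp only [Nat.mem_divisors, mem_filter, mem_Icc]
    constructor
    · rintro ⟨hd, -⟩
      obtain ⟨hpos, hle⟩ := hg v hv
      exact ⟨⟨Nat.pos_of_dvd_of_pos hd hpos, (Nat.le_of_dvd hpos hd).trans hle⟩, hd⟩
    · rintro ⟨-, hd⟩
      exact ⟨hd, (hg v hv).1.ne'⟩
  calc (#{v ∈ s | g v = 1} : ℤ) = ∑ v ∈ s, ∑ d ∈ (g v).divisors, μ d := by
        simp only [sum_divisors_moebius, card_filter, Nat.cast_sum, Nat.cast_ite, Nat.cast_one,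
          Nat.cast_zero]
    _ = ∑ v ∈ s, ∑ d ∈ Icc 1 D, if d ∣ g v then μ d else 0 :=
        sum_congr rfl fun v hv => by rw [hdivisors v hv, sum_filter]
    _ = ∑ d ∈ Icc 1 D, μ d * #{v ∈ s | d ∣ g v} := by
        rw [sum_comm]
        refine sum_congr rfl fun d _ => ?_
        rw [← sum_filter, sum_const, nsmul_eq_mul, mul_comm]

theorem norm_moebius_le_one {d : ℕ} : ‖(μ d : ℝ)‖ ≤ 1 := by
  rw [Real.norm_eq_abs]
  exact_mod_cast abs_moebius_le_one

theorem tsum_moebius_div_pow_mul_tsum_one_div_pow {k : ℕ} (hk : 1 < k) :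
    (∑' d : ℕ, (μ d : ℝ) / (d : ℝ) ^ k) * ∑' m : ℕ, 1 / (m : ℝ) ^ k = 1 := by
  have hs : 1 < (k : ℂ).re := by simpa using hk
  have hk0 : (k : ℂ) ≠ 0 := by exact_mod_cast (by omega : k ≠ 0)
  have hζ (m : ℕ) : (ζ m : ℂ) / (m : ℂ) ^ k = 1 / (m : ℂ) ^ k := by
    rcases eq_or_ne m 0 with rfl | hm
    · simp [show k ≠ 0 by omega]
    · rw [zeta_apply_ne hm, Nat.cast_one]
  have key := LSeries_zeta_mul_Lseries_moebius hs
  simp only [LSeries, LSeries.term_of_ne_zero' hk0, Complex.cpow_natCast, hζ] at key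
  apply Complex.ofReal_injective
  rw [mul_comm, Complex.ofReal_mul, Complex.ofReal_tsum, Complex.ofReal_tsum]
  push_cast
  exact key

end ArithmeticFunction

namespace Farey

def box (n M : ℕ) : Finset ((Fin n → ℤ) × ℤ) :=
  ((Fintype.piFinset fun _ => Ico (0 : ℤ) M) ×ˢ Icc (1 : ℤ) M).filter fun v => ∀ i, v.1 i < v.2

variable {n : ℕ}

@[simp]
theorem box_zero : box n 0 = ∅ := by
  simp [box]

theorem mem_box {M : ℕ} {v : (Fin n → ℤ) × ℤ} :
    v ∈ box n M ↔ (∀ i, 0 ≤ v.1 i ∧ v.1 i < v.2) ∧ 1 ≤ v.2 ∧ v.2 ≤ M := by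
  simp only [box, mem_filter, mem_product, Fintype.mem_piFinset, mem_Ico, mem_Icc]
  constructor
  · rintro ⟨⟨hp, hq⟩, hlt⟩
    exact ⟨fun i => ⟨(hp i).1, hlt i⟩, hq⟩
  · rintro ⟨hp, hq⟩
    exact ⟨⟨fun i => ⟨(hp i).1, (hp i).2.trans_le hq.2⟩, hq⟩, fun i => (hp i).2⟩

theorem card_box_le (M : ℕ) : #(box n M) ≤ M ^ (n + 1) := by
  calc #(box n M) ≤ #((Fintype.piFinset fun _ : Fin n => Ico (0 : ℤ) M) ×ˢ Icc (1 : ℤ) M) :=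
        card_filter_le _ _
    _ = M ^ (n + 1) := by simp [pow_succ]

theorem card_box_succ (M : ℕ) : #(box n (M + 1)) = #(box n M) + (M + 1) ^ n := by
  have hlow : (box n (M + 1)).filter (fun v => v.2 ≤ (M : ℤ)) = box n M := by
    ext v
    simp only [mem_filter, mem_box]
    push_cast
    constructor
    · rintro ⟨⟨hp, hq1, -⟩, hq2⟩
      exact ⟨hp, hq1, hq2⟩
    · rintro ⟨hp, hq1, hq2⟩
      exact ⟨⟨hp, hq1, by omega⟩, hq2⟩
  have htop : (box n (M + 1)).filter (fun v => ¬ v.2 ≤ (M : ℤ)) =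
      (Fintype.piFinset fun _ => Ico (0 : ℤ) (M + 1)) ×ˢ {((M + 1 : ℕ) : ℤ)} := by
    ext ⟨p, q⟩
    simp only [mem_filter, mem_box, mem_product, Fintype.mem_piFinset, mem_Ico, mem_singleton]
    push_cast
    constructor
    · rintro ⟨⟨hp, -, hq⟩, hq'⟩
      obtain rfl : q = M + 1 := by omega
      exact ⟨hp, rfl⟩
    · rintro ⟨hp, rfl⟩
      exact ⟨⟨hp, by omega, le_rfl⟩, by omega⟩
  rw [← card_filter_add_card_filter_not (fun v => v.2 ≤ (M : ℤ)), hlow, htop]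
  simp

theorem pow_le_mul_card_box (M : ℕ) : M ^ (n + 1) ≤ (n + 1) * #(box n M) := by
  induction M with
  | zero => simp
  | succ M ih =>
    rw [card_box_succ, mul_add]
    have := Nat.add_one_pow_le_pow_add_mul_pow M n
    omega

theorem mul_card_box_le (M : ℕ) : (n + 1) * #(box n M) ≤ (M + 1) ^ (n + 1) := by
  induction M with
  | zero => simp
  | succ M ih =>
    rw [card_box_succ, mul_add]
    have := Nat.pow_add_mul_pow_le_add_one_pow (M + 1) n
    omega

theorem filter_dvd_box_eq_image {Q d : ℕ} (hd : 0 < d) :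
    {v ∈ box n Q | (d : ℤ) ∣ v.2 ∧ ∀ i, (d : ℤ) ∣ v.1 i} =
      (box n (Q / d)).image ((d : ℤ) • ·) := by
  have hd' : (0 : ℤ) < d := by exact_mod_cast hd
  ext ⟨p, q⟩
  simp only [mem_filter, mem_image, mem_box, Prod.exists, Prod.smul_mk, Prod.mk.injEq,
    smul_eq_mul]
  push_cast
  constructor
  · rintro ⟨⟨hp, hq1, hqQ⟩, ⟨q', rfl⟩, hdvd⟩
    choose p' hp' using hdvd
    refine ⟨p', q', ⟨fun i => ?_, ?_, ?_⟩, funext fun i => (hp' i).symm, rfl⟩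
    · specialize hp i; rw [hp' i] at hp
      exact ⟨nonneg_of_mul_nonneg_right hp.1 hd', lt_of_mul_lt_mul_left hp.2 hd'.le⟩
    · nlinarith
    · rw [Int.le_ediv_iff_mul_le hd']; linarith
  · rintro ⟨p', q', ⟨hp, hq1, hqQ⟩, rfl, rfl⟩
    rw [Int.le_ediv_iff_mul_le hd'] at hqQ
    refine ⟨⟨fun i => ⟨?_, ?_⟩, by nlinarith, by simpa [mul_comm] using hqQ⟩, ⟨q', rfl⟩,
      fun i => ⟨p' i, rfl⟩⟩
    · simpa using mul_nonneg hd'.le (hp i).1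
    · simpa using mul_lt_mul_of_pos_left (hp i).2 hd'

theorem dvd_natAbs_gcd_snoc_iff {d : ℕ} {p : Fin n → ℤ} {q : ℤ} :
    d ∣ (univ.gcd (Fin.snoc p q : Fin (n + 1) → ℤ)).natAbs ↔
      (d : ℤ) ∣ q ∧ ∀ i, (d : ℤ) ∣ p i := by
  rw [← Int.natCast_dvd, Finset.dvd_gcd_iff, Fin.forall_fin_succ']
  simp [and_comm]

theorem primitive_iff_natAbs_gcd_eq_one {a : Fin (n + 1) → ℤ} :
    Primitive a ↔ (univ.gcd a).natAbs = 1 := by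
  have := Int.nonneg_of_normalize_eq_self (normalize_gcd (s := univ) (f := a))
  rw [Primitive]
  omega

instance : DecidablePred (@Primitive n) := fun a => inferInstanceAs (Decidable (univ.gcd a = 1))

theorem card_filter_primitive_box (Q : ℕ) :
    (#{v ∈ box n Q | Primitive (Fin.snoc v.1 v.2)} : ℤ) =
      ∑ d ∈ Icc 1 Q, μ d * #(box n (Q / d)) := by
  have hg : ∀ v ∈ box n Q, 0 < (univ.gcd (Fin.snoc v.1 v.2 : Fin (n + 1) → ℤ)).natAbs ∧
      (univ.gcd (Fin.snoc v.1 v.2 : Fin (n + 1) → ℤ)).natAbs ≤ Q := by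
    intro v hv
    obtain ⟨-, hq1, hqQ⟩ := mem_box.mp hv
    have hdvd := (dvd_natAbs_gcd_snoc_iff (p := v.1) (q := v.2)).mp dvd_rfl |>.1
    refine ⟨Nat.pos_of_ne_zero fun h0 => ?_, by have := Int.le_of_dvd (by omega) hdvd; omega⟩
    rw [h0, Nat.cast_zero, zero_dvd_iff] at hdvd
    omega
  simp only [primitive_iff_natAbs_gcd_eq_one, card_filter_eq_one_eq_sum_moebius _ _ Q hg,
    dvd_natAbs_gcd_snoc_iff]
  refine sum_congr rfl fun d hd => ?_
  have hd : 0 < d := (mem_Icc.mp hd).1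
  rw [filter_dvd_box_eq_image hd,
    card_image_of_injective _ (smul_right_injective _ (by positivity))]

theorem tendsto_natCast_div_div_atTop {d : ℕ} (hd : 0 < d) :
    Tendsto (fun Q : ℕ => ((Q / d : ℕ) : ℝ) / Q) atTop (𝓝 (1 / d)) := by
  have hlow : Tendsto (fun Q : ℕ => 1 / (d : ℝ) - 1 / Q) atTop (𝓝 (1 / d)) := by
    simpa using (tendsto_const_nhds (x := 1 / (d : ℝ))).sub tendsto_one_div_atTop_nhds_zero_nat
  refine tendsto_of_tendsto_of_tendsto_of_le_of_le' hlow tendsto_const_nhds ?_ ?_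
  · filter_upwards [eventually_gt_atTop 0] with Q hQ
    have hQ' : (0 : ℝ) < Q := by exact_mod_cast hQ
    have := Nat.floor_div_eq_div (K := ℝ) Q d ▸ Nat.sub_one_lt_floor ((Q : ℝ) / d)
    rw [le_div_iff₀ hQ']
    field_simp at this ⊢
    linarith
  · filter_upwards with Q
    rcases Nat.eq_zero_or_pos Q with rfl | hQ
    · simp
    have hQ' : (0 : ℝ) < Q := by exact_mod_cast hQ
    calc ((Q / d : ℕ) : ℝ) / Q ≤ (Q / d : ℝ) / Q := by gcongr; exact Nat.cast_div_le
      _ = 1 / d := by field_simp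

theorem tendsto_card_box_div {d : ℕ} (hd : 0 < d) :
    Tendsto (fun Q : ℕ => (#(box n (Q / d)) : ℝ) / Q ^ (n + 1)) atTop
      (𝓝 (1 / d ^ (n + 1) / (n + 1))) := by
  have hx := tendsto_natCast_div_div_atTop hd
  have hlow := hx.pow (n + 1)
  have hup := (hx.add tendsto_one_div_atTop_nhds_zero_nat).pow (n + 1)
  rw [add_zero] at hup
  have hmain : Tendsto (fun Q : ℕ => (n + 1) * (#(box n (Q / d)) : ℝ) / Q ^ (n + 1)) atTop
      (𝓝 ((1 / d) ^ (n + 1))) := by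
    refine tendsto_of_tendsto_of_tendsto_of_le_of_le' hlow hup ?_ ?_
    · filter_upwards with Q
      rw [div_pow]
      gcongr
      exact_mod_cast pow_le_mul_card_box (Q / d)
    · filter_upwards [eventually_gt_atTop 0] with Q hQ
      rw [← add_div, div_pow]
      gcongr
      exact_mod_cast mul_card_box_le (Q / d)
  convert hmain.div_const ((n : ℝ) + 1) using 1
  · ext Q
    field_simp
  · rw [_root_.one_div_pow]

theorem card_box_div_div_pow_le (Q d : ℕ) :
    (#(box n (Q / d)) : ℝ) / Q ^ (n + 1) ≤ 1 / d ^ (n + 1) := by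
  rcases Nat.eq_zero_or_pos Q with rfl | hQ
  · simp
  have hQ' : (0 : ℝ) < Q := by exact_mod_cast hQ
  calc (#(box n (Q / d)) : ℝ) / Q ^ (n + 1)
        ≤ ((Q / d : ℕ) : ℝ) ^ (n + 1) / Q ^ (n + 1) := by
          gcongr; exact_mod_cast card_box_le (Q / d)
    _ ≤ ((Q : ℝ) / d) ^ (n + 1) / Q ^ (n + 1) := by gcongr; exact Nat.cast_div_le
    _ = 1 / d ^ (n + 1) := by rw [div_pow]; field_simp

theorem tendsto_card_primitive_box_div (hn : 1 ≤ n) :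
    Tendsto (fun Q : ℕ => (#{v ∈ box n Q | Primitive (Fin.snoc v.1 v.2)} : ℝ) / Q ^ (n + 1))
      atTop (𝓝 ((∑' d : ℕ, (μ d : ℝ) / (d : ℝ) ^ (n + 1)) / (n + 1))) := by
  have hsum (Q : ℕ) : (#{v ∈ box n Q | Primitive (Fin.snoc v.1 v.2)} : ℝ) / Q ^ (n + 1) =
      ∑' d : ℕ, (μ d : ℝ) * ((#(box n (Q / d)) : ℝ) / Q ^ (n + 1)) := by
    rw [tsum_eq_sum (s := Icc 1 Q)]
    · simp_rw [← mul_div_assoc, ← sum_div]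
      congr 1
      exact_mod_cast card_filter_primitive_box Q
    · intro d hd
      rcases Nat.eq_zero_or_pos d with rfl | hd0
      · simp
      · rw [Nat.div_eq_of_lt (by simp at hd; omega)]
        simp
  simp only [hsum]
  have hlim := tendsto_tsum_of_dominated_convergence (𝓕 := atTop)
    (f := fun Q d => (μ d : ℝ) * ((#(box n (Q / d)) : ℝ) / Q ^ (n + 1)))
    (g := fun d => (μ d : ℝ) / d ^ (n + 1) / (n + 1))
    (Real.summable_one_div_nat_pow.mpr (by omega : 1 < n + 1)) (fun d => ?_) ?_
  · rwa [← tsum_div_const]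
  · rcases Nat.eq_zero_or_pos d with rfl | hd
    · simp
    · convert (tendsto_card_box_div hd).const_mul (μ d : ℝ) using 2
      ring
  · filter_upwards with Q d
    have hB : (0 : ℝ) ≤ (#(box n (Q / d)) : ℝ) / Q ^ (n + 1) := by positivity
    rw [norm_mul, Real.norm_of_nonneg hB, ← one_mul (1 / _)]
    exact mul_le_mul norm_moebius_le_one (card_box_div_div_pow_le Q d) hB zero_le_one

end Farey

/-- The number of Farey points of level Q in dimension n, i.e. the number of primitive
(p,q) ∈ ℤ^{n+1} with 0 ≤ p_i < q and 1 ≤ q ≤ Q, is asymptotic to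
Q^{n+1}/((n+1)ζ(n+1)) as Q → ∞. -/
theorem stmt18 (n : ℕ) (hn : 1 ≤ n) :
    let Z : ℝ := ∑' m : ℕ, (1 : ℝ) / (m + 1) ^ (n + 1)   -- ζ(n+1)
    let N : ℕ → ℕ := fun Q =>
      Set.ncard {pq : (Fin n → ℤ) × ℤ | Primitive (Fin.snoc pq.1 pq.2)
        ∧ (∀ i, 0 ≤ pq.1 i ∧ pq.1 i < pq.2) ∧ 1 ≤ pq.2 ∧ pq.2 ≤ (Q : ℤ)}
    Filter.Tendsto (fun Q : ℕ => (N Q : ℝ) / ((Q : ℝ) ^ (n + 1) / ((n + 1) * Z)))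
      Filter.atTop (nhds 1) := by
  intro Z N
  have hN (Q : ℕ) : N Q = #{v ∈ Farey.box n Q | Primitive (Fin.snoc v.1 v.2)} := by
    rw [← Set.ncard_coe_finset]
    simp only [N]
    congr 1
    ext v
    simp [Farey.mem_box, and_comm]
  have hZ : Z = ∑' m : ℕ, 1 / (m : ℝ) ^ (n + 1) := by
    -- the `m = 0` term on the right is `1 / 0 = 0`
    rw [(Real.summable_one_div_nat_pow.mpr (by omega : 1 < n + 1)).tsum_eq_zero_add]
    simp [Z]
  have hLZ : (∑' d : ℕ, (μ d : ℝ) / (d : ℝ) ^ (n + 1)) * Z = 1 :=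
    hZ ▸ tsum_moebius_div_pow_mul_tsum_one_div_pow (by omega)
  have hlim := (Farey.tendsto_card_primitive_box_div hn).mul_const ((n + 1) * Z)
  rw [show ∀ L : ℝ, L / (n + 1) * ((n + 1) * Z) = L * Z by intro L; field_simp, hLZ]
    at hlim
  refine hlim.congr fun Q => ?_
  rw [hN, div_div_eq_mul_div, mul_div_right_comm]
end
end

section
/- For the congruence subgroup Γ(m) = {M ∈ SL(n+1,ℤ) : M ≡ I mod m} and a primitive vector a ∈ ℤ^{n+1}, the orbit aΓ(m) equals the set of all primitive vectors b ∈ ℤ^{n+1} with b ≡ a (mod m). -/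
open Matrix

noncomputable section

/-!
Γ(m) is normal in SL(n+1, ℤ) = Γ(1), so it suffices to show that every primitive `b ≡ e_L (mod m)`
lies in `e_L Γ(m)`: the case `m = 1` of this claim is the transitivity of SL(n+1, ℤ) on primitive
vectors, which carries `a` to `e_L`. A move `b ↦ b + m (∑ wᵢ bᵢ) e_K` in Γ(m), with the `wᵢ`
chosen by prime avoidance, first makes `b_K` coprime to `b_L` (this needs `b_L ≠ 0`, automatic
unless `m = 1`, where one more move arranges it). Then the matrix that agrees with the identity
outside rows `K` and `L`, has row `L` equal to `b` and row `K ≡ e_K (mod m)`, lies in Γ(m): its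
determinant is a `2 × 2` minor, which a Bézout relation between `b_K` and `b_L` makes equal to `1`.
-/

theorem Int.exists_isCoprime_add_mul_mul {a b c z : ℤ} (hz : z ≠ 0) (hab : IsCoprime a b)
    (hcz : IsCoprime c z) : ∃ u, IsCoprime (a + b * c * u) z := by
  classical
  set u : ℤ := ∏ p ∈ z.natAbs.primeFactors.filter (fun p : ℕ => ¬(p : ℤ) ∣ a), (p : ℤ)
  refine ⟨u, isCoprime_of_prime_dvd (fun h => hz h.2) fun q hq hqx hqz => ?_⟩
  by_cases hqa : q ∣ a
  · rcases hq.dvd_or_dvd ((dvd_add_right hqa).1 hqx) with hbc | hqu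
    · rcases hq.dvd_or_dvd hbc with hqb | hqc
      · exact hq.not_isUnit (hab.isUnit_of_dvd' hqa hqb)
      · exact hq.not_isUnit (hcz.isUnit_of_dvd' hqc hqz)
    · obtain ⟨p, hp, hqp⟩ := (hq.dvd_finsetProd_iff _).1 hqu
      rw [Finset.mem_filter, Nat.mem_primeFactors] at hp
      have hpq : Associated q p := hq.associated_of_dvd (Nat.prime_iff_prime_int.1 hp.1.1) hqp
      exact hp.2 (hpq.symm.dvd.trans hqa)
  · have hqu : q ∣ u := by
      refine (Int.dvd_natAbs.2 dvd_rfl).trans (Finset.dvd_prod_of_mem _ ?_)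
      rw [Finset.mem_filter, Nat.mem_primeFactors, Int.natAbs_dvd]
      exact ⟨⟨Int.prime_iff_natAbs_prime.1 hq, Int.natAbs_dvd_natAbs.2 hqz,
        Int.natAbs_ne_zero.2 hz⟩, hqa⟩
    exact hqa ((dvd_add_left (hqu.mul_left (b * c))).1 hqx)

theorem vecMul_modEq_vecMul {ι κ : Type*} [Fintype ι] {n : ℤ} {a b : ι → ℤ}
    {M N : Matrix ι κ ℤ} (hab : ∀ i, a i ≡ b i [ZMOD n]) (hMN : ∀ i j, M i j ≡ N i j [ZMOD n])
    (j : κ) : (a ᵥ* M) j ≡ (b ᵥ* N) j [ZMOD n] :=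
  Int.ModEq.sum fun i _ => (hab i).mul (hMN i j)

section PrincipalCongruenceSubgroup

variable {ι : Type*} [Fintype ι] [DecidableEq ι] {R : Type*} [CommRing R]

def IsUnimodular (b : ι → R) : Prop :=
  ∃ c, b ⬝ᵥ c = 1

theorem vecMul_vecMul_inv (a : ι → R) (γ : Matrix.SpecialLinearGroup ι R) :
    a ᵥ* (γ : Matrix ι ι R) ᵥ* (↑γ⁻¹ : Matrix ι ι R) = a := by
  rw [vecMul_vecMul, ← Matrix.SpecialLinearGroup.coe_mul, mul_inv_cancel,
    Matrix.SpecialLinearGroup.coe_one, vecMul_one]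

theorem vecMul_inv_vecMul (a : ι → R) (γ : Matrix.SpecialLinearGroup ι R) :
    a ᵥ* (↑γ⁻¹ : Matrix ι ι R) ᵥ* (γ : Matrix ι ι R) = a := by
  simpa using vecMul_vecMul_inv a γ⁻¹

theorem IsUnimodular.vecMul {a : ι → R} (ha : IsUnimodular a)
    (γ : Matrix.SpecialLinearGroup ι R) : IsUnimodular (a ᵥ* (γ : Matrix ι ι R)) := by
  obtain ⟨c, hc⟩ := ha
  refine ⟨(↑γ⁻¹ : Matrix ι ι R) *ᵥ c, ?_⟩
  rw [dotProduct_mulVec, vecMul_vecMul_inv, hc]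

def principalCongruenceSubgroup (ι : Type*) [Fintype ι] [DecidableEq ι] (m : ℕ) :
    Subgroup (Matrix.SpecialLinearGroup ι ℤ) :=
  (Matrix.SpecialLinearGroup.map (Int.castRingHom (ZMod m))).ker

variable {m : ℕ}

theorem mem_principalCongruenceSubgroup_iff {δ : Matrix.SpecialLinearGroup ι ℤ} :
    δ ∈ principalCongruenceSubgroup ι m ↔
      ∀ i j, (δ : Matrix ι ι ℤ) i j ≡ (1 : Matrix ι ι ℤ) i j [ZMOD m] := by
  rw [principalCongruenceSubgroup, MonoidHom.mem_ker, Matrix.SpecialLinearGroup.ext_iff]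
  refine forall₂_congr fun i j => ?_
  rw [← ZMod.intCast_eq_intCast_iff]
  simp [one_apply, apply_ite (Int.cast : ℤ → ZMod m)]

/-- `b ∈ a Γ(m)`, with Γ(m) acting on row vectors by right multiplication. -/
def GammaRel (m : ℕ) (a b : ι → ℤ) : Prop :=
  ∃ δ ∈ principalCongruenceSubgroup ι m, a ᵥ* (δ : Matrix ι ι ℤ) = b

namespace GammaRel

theorem symm {a b : ι → ℤ} (h : GammaRel m a b) : GammaRel m b a := by
  obtain ⟨δ, hδ, rfl⟩ := h
  exact ⟨δ⁻¹, inv_mem hδ, vecMul_vecMul_inv a δ⟩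

theorem trans {a b c : ι → ℤ} (hab : GammaRel m a b) (hbc : GammaRel m b c) :
    GammaRel m a c := by
  obtain ⟨δ, hδ, rfl⟩ := hab
  obtain ⟨ε, hε, rfl⟩ := hbc
  exact ⟨δ * ε, mul_mem hδ hε, by simp [vecMul_vecMul]⟩

theorem vecMul {a b : ι → ℤ} (h : GammaRel m a b) (γ : Matrix.SpecialLinearGroup ι ℤ) :
    GammaRel m (a ᵥ* (γ : Matrix ι ι ℤ)) (b ᵥ* (γ : Matrix ι ι ℤ)) := by
  obtain ⟨δ, hδ, rfl⟩ := h
  refine ⟨γ⁻¹ * δ * γ, (MonoidHom.normal_ker _).conj_mem' δ hδ γ, ?_⟩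
  rw [vecMul_vecMul, vecMul_vecMul, ← Matrix.SpecialLinearGroup.coe_mul,
    ← Matrix.SpecialLinearGroup.coe_mul, mul_assoc, mul_inv_cancel_left]

theorem modEq {a b : ι → ℤ} (h : GammaRel m a b) (i : ι) : b i ≡ a i [ZMOD m] := by
  obtain ⟨δ, hδ, rfl⟩ := h
  simpa using vecMul_modEq_vecMul (fun _ => rfl) (mem_principalCongruenceSubgroup_iff.1 hδ) i

theorem isUnimodular {a b : ι → ℤ} (h : GammaRel m a b) (ha : IsUnimodular a) :
    IsUnimodular b := by
  obtain ⟨δ, -, rfl⟩ := h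
  exact ha.vecMul δ

theorem add_vecMul_of_det {A : Matrix ι ι ℤ} (hdet : (1 + A).det = 1)
    (hA : ∀ i j, (m : ℤ) ∣ A i j) (a : ι → ℤ) : GammaRel m a (a + a ᵥ* A) := by
  refine ⟨⟨1 + A, hdet⟩, mem_principalCongruenceSubgroup_iff.2 fun i j => ?_, ?_⟩
  · exact (Int.modEq_iff_dvd.2 (by simpa using hA i j)).symm
  · simp [vecMul_add]

theorem add_smul {a u v : ι → ℤ} (hvu : v ⬝ᵥ u = 0) (hu : ∀ i, (m : ℤ) ∣ u i) :
    GammaRel m a (a + (a ⬝ᵥ u) • v) := by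
  rw [← vecMul_vecMulVec]
  refine add_vecMul_of_det (A := vecMulVec u v) ?_ (fun i j => ?_) a
  · rw [vecMulVec_eq Unit, det_one_add_replicateCol_mul_replicateRow, hvu, add_zero]
  · exact vecMulVec_apply u v i j ▸ (hu i).mul_right (v j)

theorem single_of_isCoprime {K L : ι} (hKL : K ≠ L) {b : ι → ℤ}
    (hcop : IsCoprime (b K) (b L)) (hb : ∀ i, b i ≡ (Pi.single L 1 : ι → ℤ) i [ZMOD m]) :
    GammaRel m (Pi.single L 1) b := by
  obtain ⟨σ, τ, hστ⟩ := hcop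
  obtain ⟨t, ht⟩ : (m : ℤ) ∣ b L - 1 := by simpa using (hb L).symm.dvd
  -- `1 + U * V` is the identity with rows `K` and `L` replaced by `e_K + x` and `b`.
  set x : ι → ℤ := (m * t) • (σ • Pi.single L 1 - τ • Pi.single K 1)
  set y : ι → ℤ := b - Pi.single L 1
  set U : Matrix ι (Fin 2) ℤ := (Matrix.of ![Pi.single K 1, Pi.single L 1])ᵀ
  set V : Matrix (Fin 2) ι ℤ := Matrix.of ![x, y]
  have hdet : (1 + U * V).det = 1 := by
    rw [det_one_add_mul_comm, det_fin_two]
    simp [U, V, x, y, vecMul_transpose, hKL, hKL.symm]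
    linear_combination ht - (m * t) * hστ
  have hV : ∀ k j, (m : ℤ) ∣ V k j := by
    intro k j
    fin_cases k
    · exact ⟨t * (σ • Pi.single L 1 - τ • Pi.single K 1 : ι → ℤ) j, by simp [V, x]; ring⟩
    · exact (hb j).symm.dvd
  have hUV : ∀ i j, (m : ℤ) ∣ (U * V) i j :=
    fun i j => mul_apply (M := U) ▸ Finset.dvd_sum fun k _ => (hV k j).mul_left _
  convert add_vecMul_of_det hdet hUV (Pi.single L 1)
  have hUL : U.row L = Pi.single 1 1 := by
    ext k
    fin_cases k <;> simp [U, hKL]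
  rw [← vecMul_vecMul, single_one_vecMul, hUL, single_one_vecMul]
  simp [V, y]

theorem exists_isCoprime {K L : ι} (hKL : K ≠ L) {b : ι → ℤ} (hb : IsUnimodular b)
    (hL : b L ≠ 0) (hLm : IsCoprime (m : ℤ) (b L)) :
    ∃ b', GammaRel m b b' ∧ IsCoprime (b' K) (b' L) := by
  obtain ⟨c, hc⟩ := hb
  obtain ⟨u, hu⟩ := Int.exists_isCoprime_add_mul_mul hL
    (⟨c K, 1, by ring⟩ : IsCoprime (b K) (1 - b K * c K)) hLm
  set w : ι → ℤ := ((m : ℤ) * u) • (c - c K • Pi.single K 1)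
  have hbw : b ⬝ᵥ w = (1 - b K * c K) * m * u := by
    rw [dotProduct_smul, dotProduct_sub, dotProduct_smul, dotProduct_single, hc, smul_eq_mul,
      smul_eq_mul]
    ring
  refine ⟨_, add_smul (v := Pi.single K 1) (u := w) ?_ fun i => ?_, ?_⟩
  · simp [w]
  · exact ⟨u * (c - c K • Pi.single K 1 : ι → ℤ) i, by simp only [w, Pi.smul_apply, smul_eq_mul,
      mul_assoc]⟩
  · simpa [hbw, hKL.symm] using hu

theorem single_of_modEq_of_ne_zero {K L : ι} (hKL : K ≠ L) {b : ι → ℤ} (hb : IsUnimodular b)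
    (hL : b L ≠ 0) (hbL : ∀ i, b i ≡ (Pi.single L 1 : ι → ℤ) i [ZMOD m]) :
    GammaRel m (Pi.single L 1) b := by
  have hLm : IsCoprime (m : ℤ) (b L) := by
    obtain ⟨t, ht⟩ : (m : ℤ) ∣ b L - 1 := by simpa using (hbL L).symm.dvd
    exact ⟨-t, 1, by linarith⟩
  obtain ⟨b', hbb', hcop⟩ := exists_isCoprime hKL hb hL hLm
  exact (single_of_isCoprime hKL hcop fun i => (hbb'.modEq i).trans (hbL i)).trans hbb'.symm

theorem single_of_isUnimodular {K L : ι} (hKL : K ≠ L) {b : ι → ℤ} (hb : IsUnimodular b) :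
    GammaRel 1 (Pi.single L 1) b := by
  have hmod (v : ι → ℤ) (i : ι) : v i ≡ (Pi.single L 1 : ι → ℤ) i [ZMOD (1 : ℕ)] := by
    simp [Int.modEq_one]
  by_cases hL : b L = 0
  · obtain ⟨i, hi⟩ : ∃ i, b i ≠ 0 := by
      by_contra! h
      obtain ⟨c, hc⟩ := hb
      simp [funext h] at hc
    have hiL : i ≠ L := by
      rintro rfl
      exact hi hL
    have hbb' : GammaRel 1 b (b + (b ⬝ᵥ Pi.single i 1) • Pi.single L 1) :=
      add_smul (by simp [hiL]) fun _ => by simp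
    refine (single_of_modEq_of_ne_zero hKL (hbb'.isUnimodular hb) ?_ (hmod _)).trans hbb'.symm
    simpa [hL] using hi
  · exact single_of_modEq_of_ne_zero hKL hb hL (hmod b)

theorem single_of_modEq [Nontrivial ι] (L : ι) {b : ι → ℤ} (hb : IsUnimodular b)
    (hbL : ∀ i, b i ≡ (Pi.single L 1 : ι → ℤ) i [ZMOD m]) :
    GammaRel m (Pi.single L 1) b := by
  obtain ⟨K, hKL⟩ := exists_ne L
  rcases eq_or_ne m 1 with rfl | hm
  · exact single_of_isUnimodular hKL hb
  · refine single_of_modEq_of_ne_zero hKL hb (fun hL => hm ?_) hbL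
    have hm1 : (m : ℤ) ∣ 1 := by simpa [hL] using (hbL L).dvd
    exact_mod_cast Int.eq_one_of_dvd_one (Int.natCast_nonneg m) hm1

end GammaRel

theorem gammaRel_iff [Nontrivial ι] {a b : ι → ℤ} (ha : IsUnimodular a) :
    GammaRel m a b ↔ IsUnimodular b ∧ ∀ i, b i ≡ a i [ZMOD m] := by
  refine ⟨fun h => ⟨h.isUnimodular ha, h.modEq⟩, fun ⟨hb, hba⟩ => ?_⟩
  obtain ⟨L⟩ : Nonempty ι := inferInstance
  obtain ⟨γ, -, rfl⟩ := GammaRel.single_of_modEq (m := 1) L ha fun _ => by simp [Int.modEq_one]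
  have hbγ : GammaRel m (Pi.single L 1) (b ᵥ* (↑γ⁻¹ : Matrix ι ι ℤ)) := by
    refine GammaRel.single_of_modEq L (hb.vecMul γ⁻¹) fun i => ?_
    simpa only [vecMul_vecMul_inv] using
      vecMul_modEq_vecMul hba (fun _ _ => rfl) (M := (↑γ⁻¹ : Matrix ι ι ℤ)) i
  simpa only [vecMul_inv_vecMul] using hbγ.vecMul γ

end PrincipalCongruenceSubgroup

theorem primitive_iff_isUnimodular {n : ℕ} (a : Fin (n + 1) → ℤ) :
    Primitive a ↔ IsUnimodular a := by
  refine ⟨fun ha => ?_, fun ⟨c, hc⟩ => ?_⟩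
  · obtain ⟨g, hg⟩ := Finset.gcd_eq_sum_mul Finset.univ a
    exact ⟨g, by rw [dotProduct, ← hg]; exact ha⟩
  · refine Int.eq_one_of_dvd_one (Int.nonneg_of_normalize_eq_self Finset.normalize_gcd) ?_
    exact hc ▸ Finset.dvd_sum fun i hi => (Finset.gcd_dvd hi).mul_right _

theorem stmt19_general (n : ℕ) (hn : 1 ≤ n) (m : ℕ)
    (a : Fin (n+1) → ℤ) (ha : Primitive a) :
    {v : Fin (n+1) → ℤ | ∃ δ : SL (n+1) ℤ,
        (∀ i j, (δ : Matrix (Fin (n+1)) (Fin (n+1)) ℤ) i j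
            ≡ (1 : Matrix (Fin (n+1)) (Fin (n+1)) ℤ) i j [ZMOD (m : ℤ)])
        ∧ Matrix.vecMul a (δ : Matrix (Fin (n+1)) (Fin (n+1)) ℤ) = v}
      = {b : Fin (n+1) → ℤ | Primitive b ∧ ∀ i, b i ≡ a i [ZMOD (m : ℤ)]} := by
  have : Nontrivial (Fin (n + 1)) := Fin.nontrivial_iff_two_le.2 (by omega)
  ext b
  rw [Set.mem_ofPred_eq, Set.mem_ofPred_eq, primitive_iff_isUnimodular,
    ← gammaRel_iff ((primitive_iff_isUnimodular a).1 ha)]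
  simp only [GammaRel, mem_principalCongruenceSubgroup_iff]

/-- For the congruence subgroup Γ(m) and a primitive a ∈ ℤ^{n+1}, the orbit aΓ(m)
equals the set of primitive vectors congruent to a mod m. -/
theorem stmt19 (n : ℕ) (hn : 1 ≤ n) (m : ℕ) (hm : 0 < m)
    (a : Fin (n+1) → ℤ) (ha : Primitive a) :
    {v : Fin (n+1) → ℤ | ∃ δ : SL (n+1) ℤ,
        (∀ i j, (δ : Matrix (Fin (n+1)) (Fin (n+1)) ℤ) i j
            ≡ (1 : Matrix (Fin (n+1)) (Fin (n+1)) ℤ) i j [ZMOD (m : ℤ)])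
        ∧ Matrix.vecMul a (δ : Matrix (Fin (n+1)) (Fin (n+1)) ℤ) = v}
      = {b : Fin (n+1) → ℤ | Primitive b ∧ ∀ i, b i ≡ a i [ZMOD (m : ℤ)]} :=
  stmt19_general n hn m a ha
end
end
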